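/- arXiv:1208.3635 — 8 statements merged into one kernel-verified Lean document; each statement's English description precedes it below -/
import Mathlib

section
/- Let X be a topological space, p ∈ X, and let κ be an infinite regular cardinal. If there is an escape sequence at p of length κ all of whose terms are regular open sets, then X has a cellular family of cardinality κ. -/
universe u v w

/-- `U` is an escape sequence at `p`: a decreasing (w.r.t. the index order) sequence
of neighborhoods of `p` whose intersection is not a neighborhood of `p`. -/
def IsEscapeSeq {X : Type w} [TopologicalSpace X] (p : X) {ι : Type u} [Preorder ι]
    (U : ι → Set X) : Prop :=
  (∀ i, U i ∈ nhds p) ∧ (∀ i j : ι, i ≤ j → U j ⊆ U i) ∧ (⋂ i, U i) ∉ nhds p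

/-!
Since the intersection of the sequence is not a neighborhood of `p`, the sequence is not
eventually constant, so the indices at which a new value first appears are cofinal and, by
regularity of `κ`, there are `κ` of them. Along these indices the sequence is strictly
decreasing; for consecutive values `V ⊋ V'` the annuli `V \ closure V'` are pairwise
disjoint, and each is nonempty because `V'` is regular open.
-/

open Set Order Cardinal Function

section Annulus

variable {X : Type*} [TopologicalSpace X]

theorem diff_closure_nonempty_of_ssubset {V W : Set X} (hV : IsOpen V)
    (hW : interior (closure W) = W) (hWV : W ⊂ V) : (V \ closure W).Nonempty := by
  rw [sdiff_nonempty]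
  intro hVW
  exact hWV.not_subset (hW ▸ hV.subset_interior_iff.2 hVW)

variable {ι : Type*} [LinearOrder ι] [SuccOrder ι]

def annulus (V : ι → Set X) (i : ι) : Set X :=
  V i \ closure (V (succ i))

theorem isOpen_annulus {V : ι → Set X} (hV : ∀ i, IsOpen (V i)) (i : ι) :
    IsOpen (annulus V i) :=
  (hV i).sdiff isClosed_closure

theorem Antitone.pairwise_disjoint_annulus {V : ι → Set X} (hV : Antitone V) :
    Pairwise (Disjoint on annulus V) := by
  refine (pairwise_disjoint_on _).2 fun i j hij => ?_
  have hj : annulus V j ⊆ closure (V (succ i)) :=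
    sdiff_subset.trans ((hV (succ_le_of_lt hij)).trans subset_closure)
  exact disjoint_sdiff_left.mono_right hj

theorem StrictAnti.annulus_nonempty [NoMaxOrder ι] {V : ι → Set X} (hV : StrictAnti V)
    (hopen : ∀ i, IsOpen (V i)) (hreg : ∀ i, interior (closure (V i)) = V i) (i : ι) :
    (annulus V i).Nonempty :=
  diff_closure_nonempty_of_ssubset (hopen i) (hreg _) (hV (lt_succ i))

theorem StrictAnti.annulus_injective [NoMaxOrder ι] {V : ι → Set X} (hV : StrictAnti V)
    (hopen : ∀ i, IsOpen (V i)) (hreg : ∀ i, interior (closure (V i)) = V i) :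
    Injective (annulus V) :=
  pairwise_ne_iff_injective.1 <| hV.antitone.pairwise_disjoint_annulus.mono fun i j hdisj heq =>
    (hV.annulus_nonempty hopen hreg i).ne_empty <| disjoint_self.1 <| by rwa [onFun, ← heq] at hdisj

end Annulus

section FirstOccurrences

variable {ι α : Type*} [LinearOrder ι]

def firstOccurrences (U : ι → α) : Set ι :=
  {i | ∀ k < i, U k ≠ U i}

theorem Antitone.strictAntiOn_firstOccurrences {U : ι → Set α} (hU : Antitone U) :
    StrictAntiOn U (firstOccurrences U) :=
  fun _ _ _ hj hij => (hU hij.le).ssubset_of_ne (hj _ hij).symm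

theorem Antitone.exists_firstOccurrences_gt [WellFoundedLT ι] {U : ι → Set α}
    (hU : Antitone U) (hU' : ∀ i, ¬ U i ⊆ ⋂ j, U j) (i : ι) :
    ∃ j ∈ firstOccurrences U, i < j := by
  obtain ⟨j, hj⟩ : ∃ j, ¬ U i ⊆ U j := by simpa only [subset_iInter_iff, not_forall] using hU' i
  obtain ⟨j, hj, hmin⟩ := wellFounded_lt.has_min {j | ¬ U i ⊆ U j} ⟨j, hj⟩
  refine ⟨j, fun k hkj hkj' => hj ?_, lt_of_not_ge fun hji => hj (hU hji)⟩
  exact hkj' ▸ not_not.1 fun hk => hmin k hk hkj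

end FirstOccurrences

theorem Cardinal.IsRegular.mk_eq_of_isCofinal {κ : Cardinal.{u}} (hκ : κ.IsRegular)
    {s : Set κ.ord.ToType} (hs : IsCofinal s) : #s = κ := by
  refine le_antisymm ((mk_set_le s).trans_eq (by rw [mk_toType, card_ord])) ?_
  calc κ = Order.cof κ.ord.ToType := by rw [Ordinal.cof_toType, hκ.cof_ord]
    _ ≤ #s := cof_le hs

/-- If `p` has a regular-open escape sequence of length an infinite
regular cardinal `κ`, then `X` has a cellular family (pairwise disjoint family of
nonempty open sets) of cardinality `κ`. -/
theorem escape_seq_regular_open_cellular {X : Type u} [TopologicalSpace X] (p : X)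
    (κ : Cardinal.{u}) (hκ : κ.IsRegular) (U : κ.ord.ToType → Set X)
    (hesc : IsEscapeSeq p U)
    (hro : ∀ i, U i = interior (closure (U i))) :
    ∃ C : Set (Set X), Cardinal.mk C = κ ∧
      (∀ V ∈ C, IsOpen V ∧ V.Nonempty) ∧
      (∀ V ∈ C, ∀ W ∈ C, V ≠ W → Disjoint V W) := by
  obtain ⟨hnhds, hanti, hint⟩ := hesc
  have hU : Antitone U := fun i j hij => hanti i j hij
  have hgt := hU.exists_firstOccurrences_gt fun i hi => hint (Filter.mem_of_superset (hnhds i) hi)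
  let J := firstOccurrences U
  have : NoMaxOrder J := ⟨fun i => by
    obtain ⟨j, hj, hij⟩ := hgt i
    exact ⟨⟨j, hj⟩, hij⟩⟩
  let : SuccOrder J := SuccOrder.ofLinearWellFoundedLT J
  let V : J → Set X := fun i => U i
  have hV : StrictAnti V := strictAntiOn_iff_strictAnti.1 hU.strictAntiOn_firstOccurrences
  have hreg : ∀ i, interior (closure (V i)) = V i := fun i => (hro i).symm
  have hopen : ∀ i, IsOpen (V i) := fun i => hreg i ▸ isOpen_interior
  refine ⟨range (annulus V), ?_, ?_, ?_⟩
  · rw [mk_range_eq _ (hV.annulus_injective hopen hreg)]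
    exact hκ.mk_eq_of_isCofinal fun i => (hgt i).imp fun _ ⟨hj, hij⟩ => ⟨hj, hij.le⟩
  · rintro _ ⟨i, rfl⟩
    exact ⟨isOpen_annulus hopen i, hV.annulus_nonempty hopen hreg i⟩
  · rintro _ ⟨i, rfl⟩ _ ⟨j, rfl⟩ hne
    exact hV.antitone.pairwise_disjoint_annulus fun hij => hne (congrArg _ hij)
end

section
/- Let κ_0 < κ_1 < ⋯ < κ_n be infinite regular cardinals, let X be a T3 (regular Hausdorff) space, let p ∈ X, and suppose the neighborhood filter N(p,X) is cofinally equivalent to the coordinatewise product ∏_{i≤n} κ_i. Then X has a cellular family of cardinality κ_n. -/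
/-!
Cofinal equivalence gives maps `φ : ∏ κᵢ → N(p,X)` and `ψ : N(p,X) → ∏ κᵢ` with
`ψ V ≤ s → φ s ⊆ V` and `V ⊆ φ s → s ≤ ψ V`. Split off the last coordinate, of type `κₙ`, and
fix closed neighbourhoods `K α ⊆ φ (α, z)`. The remaining coordinates form a product of size
`< κₙ`, so by regularity of `κₙ` some `v` is the lower part of `ψ (K α)` for unboundedly many `α`.
Put `U γ = interior φ (γ, v)` and pick such an `α = h γ` above the last coordinate of `ψ (U γ)`.
Then `U γ ⊈ K (h γ)`, while `U γ ⊆ K (h γ')` as soon as `γ` exceeds the last coordinate of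
`ψ (K (h γ'))`. Along a `κₙ`-sequence `γ ξ` growing fast enough, the open sets
`U (γ ξ) \ K (h (γ ξ))` are therefore nonempty and pairwise disjoint.
-/

universe u v w

/-- Two preorders are *cofinally equivalent* if there is a preorder (given here by a
reflexive transitive relation `le` on `R`) such that both are order isomorphic to
cofinal subsets of it. -/
def CofEquiv (P : Type u) (Q : Type v) [Preorder P] [Preorder Q] : Prop :=
  ∃ (R : Type (max u v)) (le : R → R → Prop),
    Reflexive le ∧ Transitive le ∧
    ∃ (f : P → R) (g : Q → R),
      Function.Injective f ∧ Function.Injective g ∧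
      (∀ a b : P, a ≤ b ↔ le (f a) (f b)) ∧
      (∀ a b : Q, a ≤ b ↔ le (g a) (g b)) ∧
      (∀ r : R, ∃ a : P, le r (f a)) ∧
      (∀ r : R, ∃ b : Q, le r (g b))

/-- The neighborhood filter of `p`, i.e. all sets whose interior contains `p`,
as a preorder under containment `⊇`. -/
def Nbhds (X : Type w) [TopologicalSpace X] (p : X) := {U : Set X // U ∈ nhds p}

instance (X : Type w) [TopologicalSpace X] (p : X) : Preorder (Nbhds X p) where
  le U V := Subtype.val V ⊆ Subtype.val U
  le_refl _ := subset_rfl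
  le_trans _ _ _ h1 h2 := Set.Subset.trans h2 h1

open Cardinal Set Function

theorem CofEquiv.exists_maps {P : Type u} {Q : Type v} [Preorder P] [Preorder Q]
    (h : CofEquiv P Q) :
    ∃ (φ : Q → P) (ψ : P → Q), (∀ a b, ψ a ≤ b → a ≤ φ b) ∧ (∀ a b, φ b ≤ a → b ≤ ψ a) := by
  obtain ⟨R, le, -, htrans, f, g, -, -, hf, hg, hfcof, hgcof⟩ := h
  choose φ hφ using fun b => hfcof (g b)
  choose ψ hψ using fun a => hgcof (f a)
  exact ⟨φ, ψ, fun a b hab => (hf _ _).2 (htrans (htrans (hψ a) ((hg _ _).1 hab)) (hφ b)),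
    fun a b hba => (hg _ _).2 (htrans (htrans (hφ b) ((hf _ _).1 hba)) (hψ a))⟩

theorem Cardinal.prod_lt_of_forall_lt {ι : Type u} [Fintype ι] {c : ι → Cardinal.{v}}
    {l : Cardinal.{max u v}} (hl : ℵ₀ ≤ l) (h : ∀ i, lift.{u} (c i) < l) : prod c < l := by
  rw [prod_eq_of_fintype]
  refine Finset.prod_induction _ (fun x => lift.{u} x < l) (fun a b ha hb => ?_) ?_ fun i _ => h i
  · rw [lift_mul]
    exact mul_lt_of_lt hl ha hb
  · rw [lift_one]
    exact one_lt_aleph0.trans_le hl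

namespace Order

variable {α : Type u} [LinearOrder α]

theorem exists_forall_lt_of_mk_lt_cof {ι : Type u} (f : ι → α) (h : #ι < cof α) :
    ∃ γ, ∀ i, f i < γ := by
  by_contra! hf
  have hcofinal : IsCofinal (range f) := fun γ =>
    let ⟨i, hi⟩ := hf γ
    ⟨f i, mem_range_self i, hi⟩
  exact ((cof_le hcofinal).trans mk_range_le).not_gt h

theorem exists_unbounded_fiber_of_mk_lt_cof {β : Type u} (f : α → β) (h : #β < cof α) :
    ∃ b, ∀ a, ∃ a', f a' = b ∧ a < a' := by
  by_contra! hf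
  choose bound hbound using hf
  obtain ⟨γ, hγ⟩ := exists_forall_lt_of_mk_lt_cof bound h
  exact (hbound (f γ) γ rfl).not_gt (hγ (f γ))

theorem exists_map_lt_of_mk_Iio_lt_cof [WellFoundedLT α] (hα : ∀ a : α, #(Iio a) < cof α)
    (F : α → α) : ∃ γ : α → α, ∀ ⦃a b⦄, a < b → F (γ a) < γ b := by
  choose bound hbound using fun (b : α) (g : Iio b → α) => exists_forall_lt_of_mk_lt_cof g (hα b)
  let γ : α → α := wellFounded_lt.fix fun b IH => bound b fun a => F (IH a a.2)
  refine ⟨γ, fun a b hab => ?_⟩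
  rw [show γ b = _ from wellFounded_lt.fix_eq _ b]
  exact hbound b (fun a => F (γ a)) ⟨a, hab⟩

end Order

theorem exists_cellular_family_of_pairwise_disjoint {X : Type u} [TopologicalSpace X]
    {ι : Type u} (W : ι → Set X) (hW : ∀ i, IsOpen (W i) ∧ (W i).Nonempty)
    (hdisj : Pairwise (Disjoint on W)) :
    ∃ C : Set (Set X), #C = #ι ∧ (∀ V ∈ C, IsOpen V ∧ V.Nonempty) ∧
      (∀ V ∈ C, ∀ W ∈ C, V ≠ W → Disjoint V W) := by
  have hinj : Injective W := fun i j hij => by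
    by_contra hne
    have hjj : Disjoint (W i) (W j) := hdisj hne
    rw [hij, disjoint_self, bot_eq_empty] at hjj
    exact (hW j).2.ne_empty hjj
  refine ⟨range W, mk_range_eq W hinj, forall_mem_range.2 hW, ?_⟩
  rintro _ ⟨i, rfl⟩ _ ⟨j, rfl⟩ hne
  exact hdisj (ne_of_apply_ne W hne)

theorem exists_pairwise_disjoint_of_maps {X : Type u} [TopologicalSpace X] [RegularSpace X]
    {p : X} {κ : Cardinal.{u}} (hκ : κ.IsRegular) {B : Type u} [Preorder B] (hB : #B < κ)
    (φ : κ.ord.ToType × B → Nbhds X p) (ψ : Nbhds X p → κ.ord.ToType × B)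
    (hφ : ∀ V s, ψ V ≤ s → V ≤ φ s) (hψ : ∀ V s, φ s ≤ V → s ≤ ψ V) :
    ∃ W : κ.ord.ToType → Set X, (∀ ξ, IsOpen (W ξ) ∧ (W ξ).Nonempty) ∧
      Pairwise (Disjoint on W) := by
  have hcof : Order.cof κ.ord.ToType = κ := by rw [Ordinal.cof_toType, hκ.cof_ord]
  obtain ⟨-, z⟩ := ψ ⟨univ, Filter.univ_mem⟩
  choose K hK hKclosed hKsub using fun α : κ.ord.ToType =>
    exists_mem_nhds_isClosed_subset (φ (α, z)).2
  obtain ⟨v, hv⟩ :=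
    Order.exists_unbounded_fiber_of_mk_lt_cof (fun α => (ψ ⟨K α, hK α⟩).2) (hB.trans_eq hcof.symm)
  let U γ : Nbhds X p := ⟨interior (φ (γ, v)).1, interior_mem_nhds.2 (φ _).2⟩
  choose h hhv hhlt using fun γ => hv (ψ (U γ)).1
  have hIio (ξ : κ.ord.ToType) : #(Iio ξ) < Order.cof κ.ord.ToType :=
    by rw [hcof]; simpa using mk_Iio_lt ξ
  obtain ⟨γ, hγ⟩ := Order.exists_map_lt_of_mk_Iio_lt_cof hIio fun γ => (ψ ⟨K (h γ), hK _⟩).1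
  refine ⟨fun ξ => (U (γ ξ)).1 \ K (h (γ ξ)),
    fun ξ => ⟨isOpen_interior.sdiff (hKclosed _), ?_⟩, (pairwise_disjoint_on _).2 fun η ξ hlt => ?_⟩
  · rw [nonempty_iff_ne_empty, Ne, sdiff_eq_empty]
    intro hUK
    exact (hhlt _).not_ge (hψ _ (h (γ ξ), z) (hUK.trans (hKsub _))).1
  · have hle : ψ ⟨K (h (γ η)), hK _⟩ ≤ (γ ξ, v) := ⟨(hγ hlt).le, (hhv _).le⟩
    exact disjoint_sdiff_left.mono_right (sdiff_subset.trans (interior_subset.trans (hφ _ _ hle)))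

/-- If `κ 0 < ⋯ < κ n` are infinite regular cardinals, `X` is `T₃`,
and `N(p,X)` is cofinally equivalent to `∏_{i ≤ n} κ i`, then `X` has a cellular
family of cardinality `κ n`. -/
theorem rectangular_base_cellular {X : Type u} [TopologicalSpace X] [T3Space X] (p : X)
    (n : ℕ) (κ : Fin (n + 1) → Cardinal.{u})
    (hreg : ∀ i, (κ i).IsRegular) (hmono : StrictMono κ)
    (heq : CofEquiv (Nbhds X p) (∀ i, (κ i).ord.ToType)) :
    ∃ C : Set (Set X), Cardinal.mk C = κ (Fin.last n) ∧
      (∀ V ∈ C, IsOpen V ∧ V.Nonempty) ∧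
      (∀ V ∈ C, ∀ W ∈ C, V ≠ W → Disjoint V W) := by
  obtain ⟨φ, ψ, hφ, hψ⟩ := heq.exists_maps
  let e := Fin.snocOrderIso fun i => (κ i).ord.ToType
  have hB : #(∀ i : Fin n, (κ i.castSucc).ord.ToType) < κ (Fin.last n) := by
    rw [mk_pi]
    refine prod_lt_of_forall_lt (hreg _).aleph0_le fun i => ?_
    simpa using hmono (Fin.castSucc_lt_last i)
  obtain ⟨W, hW, hdisj⟩ := exists_pairwise_disjoint_of_maps (hreg (Fin.last n)) hB (φ ∘ e)
    (e.symm ∘ ψ) (fun V s h => hφ V _ (e.symm_apply_le.1 h))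
    (fun V s h => e.le_symm_apply.2 (hψ V _ h))
  simpa using exists_cellular_family_of_pairwise_disjoint W hW hdisj
end

section
/- Let κ be an infinite regular cardinal, let D and E be preorders, let X be a topological space and p ∈ X. If the neighborhood filter N(p,X) is cofinally equivalent to D × E and cf(D) < κ < add(E), then there is no escape sequence at p of length κ. -/
universe u v w

/-- The cofinality of a preorder: the least cardinality of a cofinal subset. -/
noncomputable def cofOf (D : Type u) [Preorder D] : Cardinal.{u} :=
  sInf {c | ∃ s : Set D, (∀ d : D, ∃ x ∈ s, d ≤ x) ∧ Cardinal.mk s = c}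

/-!
Push a `κ`-sequence of neighborhoods `U i` through a Tukey map into `D × E`. Since
`cf D < κ = cf κ`, cofinally many of the `D`-coordinates lie below a single element of a
cofinal subset of `D`, and since `κ < add E` all `E`-coordinates have a common upper bound.
This gives one point of `D × E` lying above cofinally many images, so the Tukey property yields
a single neighborhood contained in cofinally many, hence in all, of the `U i`.
-/

open Cardinal Order

theorem cofOf_eq_cof (D : Type u) [Preorder D] : cofOf D = cof D := by
  rw [cofOf, cof, iInf]
  congr 1
  ext c
  simp [IsCofinal]

def IsTukeyMap {P : Type u} {Q : Type v} [Preorder P] [Preorder Q] (φ : P → Q) : Prop :=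
  ∀ q : Q, BddAbove (φ ⁻¹' Set.Iic q)

theorem CofEquiv.exists_isTukeyMap {P : Type u} {Q : Type v} [Preorder P] [Preorder Q]
    (h : CofEquiv P Q) : ∃ φ : P → Q, IsTukeyMap φ := by
  obtain ⟨R, le, -, htrans, f, g, -, -, hf, hg, hfc, hgc⟩ := h
  choose φ hφ using fun a => hgc (f a)
  refine ⟨φ, fun q => ?_⟩
  obtain ⟨a', ha'⟩ := hfc (g q)
  exact ⟨a', fun a (ha : φ a ≤ q) => (hf a a').2 (htrans (hφ a) (htrans ((hg _ _).1 ha) ha'))⟩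

theorem exists_frequently_eq_of_mk_lt_cof {α β : Type u} [LinearOrder α] (c : α → β)
    (hβ : #β < cof α) : ∃ b, ∀ j, ∃ i, j ≤ i ∧ c i = b := by
  by_contra! hc
  choose j hj using hc
  have hj_range : ¬ IsCofinal (Set.range j) := fun h =>
    ((cof_le h).trans mk_range_le).not_gt hβ
  obtain ⟨a, ha⟩ : ∃ a, ∀ b, j b < a := by simpa [IsCofinal] using hj_range
  exact hj (c a) a (ha _).le rfl

theorem exists_frequently_le_of_cof_lt {α D E : Type u} [LinearOrder α] [Preorder D]
    [Preorder E] (x : α → D × E) (hD : cof D < cof α)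
    (hE : ∀ s : Set E, #s ≤ #α → ∃ b, ∀ e ∈ s, e ≤ b) :
    ∃ q, ∀ j, ∃ i, j ≤ i ∧ x i ≤ q := by
  obtain ⟨S, hS, hS_mk⟩ := exists_cof_eq D
  choose c hcS hc using fun i => hS (x i).1
  obtain ⟨d, hd⟩ :=
    exists_frequently_eq_of_mk_lt_cof (fun i => (⟨c i, hcS i⟩ : S)) (hS_mk ▸ hD)
  obtain ⟨e, he⟩ := hE (Set.range fun i => (x i).2) mk_range_le
  refine ⟨(d.1, e), fun j => ?_⟩
  obtain ⟨i, hji, hi⟩ := hd j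
  exact ⟨i, hji, congrArg Subtype.val hi ▸ hc i, he _ ⟨i, rfl⟩⟩

/-- If `N(p,X) ≡cf D × E`, `cf D < κ`, and `κ < add E` (expressed
faithfully, including the case `add E = ∞`, as: every subset of `E` of cardinality
at most `κ` has an upper bound), where `κ` is an infinite regular cardinal, then
there is no escape sequence at `p` of length `κ`. -/
theorem no_escape_seq_in_gap {X : Type w} [TopologicalSpace X] (p : X)
    (κ : Cardinal.{u}) (hκ : κ.IsRegular)
    (D E : Type u) [Preorder D] [Preorder E]
    (hcf : cofOf D < κ)
    (hadd : ∀ s : Set E, Cardinal.mk s ≤ κ → ∃ b : E, ∀ x ∈ s, x ≤ b)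
    (heq : CofEquiv (Nbhds X p) (D × E)) :
    ¬ ∃ U : κ.ord.ToType → Set X, IsEscapeSeq p U := by
  rintro ⟨U, hU, hU_anti, hU_inter⟩
  obtain ⟨φ, hφ⟩ := heq.exists_isTukeyMap
  obtain ⟨q, hq⟩ := exists_frequently_le_of_cof_lt (fun i => φ ⟨U i, hU i⟩)
    (by rwa [← cofOf_eq_cof, Ordinal.cof_toType, hκ.cof_ord])
    (by rwa [mk_ord_toType])
  obtain ⟨V, hV⟩ := hφ q
  refine hU_inter (Filter.mem_of_superset V.2 (Set.subset_iInter fun j => ?_))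
  obtain ⟨i, hji, hi⟩ := hq j
  exact Set.Subset.trans (hV hi) (hU_anti j i hji)
end

section
/- Let X be a T3 (regular Hausdorff) space, p ∈ X, and let D and E be preorders with cf(D) < add(E) and such that E has no maximum (add(E) < ∞). If the neighborhood filter N(p,X) is cofinally equivalent to D × E, then there is an escape sequence at p of length add(E) all of whose terms are regular open sets. -/
universe u v w

/-- The additivity of a preorder: the least cardinality of an unbounded subset
(equivalently, the least `λ` such that the preorder is not `λ`-directed; it is `∞`,
i.e. left undefined, precisely when there is a maximum). -/
noncomputable def addOf (D : Type u) [Preorder D] : Cardinal.{u} :=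
  sInf {c | ∃ s : Set D, ¬(∃ b : D, ∀ x ∈ s, x ≤ b) ∧ Cardinal.mk s = c}

/-!
Let `φ : D × E → N(p,X)` and `ψ : N(p,X) → D × E` be Tukey maps witnessing the cofinal
equivalence, `κ = add E`, and `s ⊆ E` unbounded of size `κ`. For `x ∈ s` pick a closed
neighbourhood `z x ⊆ φ (d₀, x)`. The first coordinates of `ψ (z x)` are dominated by a cofinal
subset of `D` of size `< κ`, so they all lie below a single `c` on some unbounded `s' ⊆ s`,
which still has size `κ`. Enumerate `s'` in order type `κ`: fewer than `κ` second coordinates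
are bounded by some `b`, so each initial intersection of the `z x` contains `φ (c, b)`, while a
neighbourhood inside all of them would bound `s'` through `ψ`. The interiors of these closed
initial intersections are the regular open escape sequence.
-/

open Cardinal Set Filter Topology

section Additivity

variable {E : Type u} [Preorder E]

theorem addOf_le_mk_of_not_bddAbove {s : Set E} (hs : ¬BddAbove s) : addOf E ≤ #s :=
  csInf_le' ⟨s, hs, rfl⟩

theorem bddAbove_of_mk_lt_addOf {s : Set E} (hs : #s < addOf E) : BddAbove s :=
  not_not.1 fun h => (addOf_le_mk_of_not_bddAbove h).not_gt hs

theorem exists_not_bddAbove_mk_eq_addOf (hE : ¬∃ m : E, ∀ x, x ≤ m) :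
    ∃ s : Set E, ¬BddAbove s ∧ #s = addOf E :=
  csInf_mem (s := {c | ∃ s : Set E, ¬BddAbove s ∧ #s = c})
    ⟨_, univ, fun ⟨m, hm⟩ => hE ⟨m, fun x => hm (mem_univ x)⟩, rfl⟩

theorem bddAbove_iUnion_of_mk_lt_addOf {ι : Type u} {t : ι → Set E} (hι : #ι < addOf E)
    (ht : ∀ i, BddAbove (t i)) : BddAbove (⋃ i, t i) := by
  choose b hb using ht
  obtain ⟨B, hB⟩ := bddAbove_of_mk_lt_addOf (mk_range_le.trans_lt hι : #(range b) < _)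
  refine ⟨B, ?_⟩
  simp only [mem_upperBounds, mem_iUnion, forall_exists_index]
  exact fun x i hx => (hb i hx).trans (hB (mem_range_self i))

theorem exists_not_bddAbove_inter_preimage {ι : Type u} {s : Set E} (hs : ¬BddAbove s)
    (γ : E → ι) (hι : #ι < addOf E) : ∃ i, ¬BddAbove (s ∩ γ ⁻¹' {i}) := by
  by_contra! h
  refine hs ((bddAbove_iUnion_of_mk_lt_addOf hι h).mono fun x hx => ?_)
  exact mem_iUnion.2 ⟨γ x, hx, rfl⟩

theorem aleph0_le_addOf [IsDirectedOrder E] [Nonempty E] (hE : ¬∃ m : E, ∀ x, x ≤ m) :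
    ℵ₀ ≤ addOf E := by
  obtain ⟨s, hs, hcard⟩ := exists_not_bddAbove_mk_eq_addOf hE
  rw [← hcard]
  by_contra! hfin
  exact hs (lt_aleph0_iff_set_finite.1 hfin).bddAbove

theorem bddAbove_image_Iic_of_aleph0_le_addOf (hE : ℵ₀ ≤ addOf E)
    (e : (addOf E).ord.ToType → E) (ξ : (addOf E).ord.ToType) : BddAbove (e '' Iic ξ) := by
  refine bddAbove_of_mk_lt_addOf (mk_image_le.trans_lt ?_)
  simpa using mk_Iic_lt ξ (by simp) (by simpa using hE)

end Additivity

theorem exists_not_bddAbove_le_of_cofOf_lt_addOf {D E : Type u} [Preorder D] [Preorder E]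
    (hE : ¬∃ m : E, ∀ x, x ≤ m) (hcf : cofOf D < addOf E) (y : E → D) :
    ∃ c : D, ∃ s : Set E, ¬BddAbove s ∧ #s = addOf E ∧ ∀ x ∈ s, y x ≤ c := by
  obtain ⟨s, hs, hcard⟩ := exists_not_bddAbove_mk_eq_addOf hE
  obtain ⟨C, hC, hCcard⟩ : ∃ C : Set D, IsCofinal C ∧ #C = cofOf D :=
    csInf_mem (s := {c | ∃ C : Set D, IsCofinal C ∧ #C = c}) ⟨_, univ, IsCofinal.univ, rfl⟩
  choose γ hγC hγ using fun x => hC (y x)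
  obtain ⟨c, hc⟩ := exists_not_bddAbove_inter_preimage hs (fun x => (⟨γ x, hγC x⟩ : C))
    (hCcard.trans_lt hcf)
  refine ⟨c, _, hc, le_antisymm ?_ (addOf_le_mk_of_not_bddAbove hc), ?_⟩
  · exact hcard ▸ mk_le_mk_of_subset inter_subset_left
  · rintro x ⟨-, hx⟩
    exact (hγ x).trans_eq (congrArg Subtype.val hx)

theorem CofEquiv.exists_tukey_maps {P Q : Type*} [Preorder P] [Preorder Q]
    (h : CofEquiv P Q) : ∃ (φ : Q → P) (ψ : P → Q),
      (∀ q a, φ q ≤ a → q ≤ ψ a) ∧ ∀ a q, ψ a ≤ q → a ≤ φ q := by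
  obtain ⟨R, le, -, htrans, f, g, -, -, hf, hg, hfc, hgc⟩ := h
  choose φ hφ using fun q => hfc (g q)
  choose ψ hψ using fun a => hgc (f a)
  exact ⟨φ, ψ, fun q a h => (hg _ _).2 (htrans (hφ q) (htrans ((hf _ _).1 h) (hψ a))),
    fun a q h => (hf _ _).2 (htrans (hψ a) (htrans ((hg _ _).1 h) (hφ q)))⟩

theorem isDirectedOrder_of_tukey {P Q : Type*} [Preorder P] [Preorder Q] [IsDirectedOrder P]
    {φ : Q → P} {ψ : P → Q} (h : ∀ q a, φ q ≤ a → q ≤ ψ a) : IsDirectedOrder Q where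
  directed q₁ q₂ :=
    let ⟨a, h₁, h₂⟩ := directed_of (· ≤ ·) (φ q₁) (φ q₂)
    ⟨ψ a, h _ _ h₁, h _ _ h₂⟩

theorem isDirectedOrder_of_prod {D E : Type*} [Preorder D] [Preorder E] [Nonempty D]
    [IsDirectedOrder (D × E)] : IsDirectedOrder E where
  directed e₁ e₂ :=
    let d := Classical.arbitrary D
    let ⟨c, h₁, h₂⟩ := directed_of (· ≤ ·) (d, e₁) (d, e₂)
    ⟨c.2, h₁.2, h₂.2⟩

instance {X : Type*} [TopologicalSpace X] (p : X) : IsDirectedOrder (Nbhds X p) where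
  directed U V := ⟨⟨U.1 ∩ V.1, inter_mem U.2 V.2⟩, inter_subset_left, inter_subset_right⟩

theorem IsClosed.interior_closure_interior {X : Type*} [TopologicalSpace X] {s : Set X}
    (hs : IsClosed s) : interior (closure (interior s)) = interior s :=
  (interior_mono hs.closure_interior_subset).antisymm
    isOpen_interior.subset_interior_closure

theorem isEscapeSeq_interior_biInter_Iic {X : Type*} [TopologicalSpace X] {p : X}
    {K : Type u} [Preorder K] {F : K → Set X} (hF : ∀ ξ, (⋂ ζ ≤ ξ, F ζ) ∈ 𝓝 p)
    (hF' : (⋂ ζ, F ζ) ∉ 𝓝 p) : IsEscapeSeq p fun ξ => interior (⋂ ζ ≤ ξ, F ζ) :=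
  ⟨fun ξ => interior_mem_nhds.2 (hF ξ),
    fun _ _ h => interior_mono (biInter_mono (fun _ hζ => le_trans hζ h) fun _ _ => subset_rfl),
    fun hmem => hF' (mem_of_superset hmem (iInter_mono fun ζ =>
      interior_subset.trans (biInter_subset_of_mem (le_refl ζ))))⟩

theorem exists_closed_family_of_tukey {X : Type*} [TopologicalSpace X] [T3Space X] {p : X}
    {D E : Type u} [Preorder D] [Preorder E] [Nonempty D] (hE : ¬∃ m : E, ∀ x, x ≤ m)
    (hcf : cofOf D < addOf E) (hκ : ℵ₀ ≤ addOf E)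
    {φ : D × E → Nbhds X p} {ψ : Nbhds X p → D × E}
    (hφψ : ∀ q a, φ q ≤ a → q ≤ ψ a) (hψφ : ∀ a q, ψ a ≤ q → a ≤ φ q) :
    ∃ F : (addOf E).ord.ToType → Set X,
      (∀ ζ, IsClosed (F ζ)) ∧ (∀ ξ, (⋂ ζ ≤ ξ, F ζ) ∈ 𝓝 p) ∧ (⋂ ζ, F ζ) ∉ 𝓝 p := by
  let d₀ := Classical.arbitrary D
  choose z hz hzc hzφ using fun x : E => exists_mem_nhds_isClosed_subset (φ (d₀, x)).2
  obtain ⟨c, s, hs, hcard, hsc⟩ :=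
    exists_not_bddAbove_le_of_cofOf_lt_addOf hE hcf fun x => (ψ ⟨z x, hz x⟩).1
  obtain ⟨v⟩ : Nonempty ((addOf E).ord.ToType ≃ s) := by
    rw [← Cardinal.eq, mk_toType, card_ord, hcard]
  refine ⟨fun ζ => z (v ζ), fun ζ => hzc _, fun ξ => ?_, fun hmem => hs ?_⟩
  · obtain ⟨b, hb⟩ := bddAbove_image_Iic_of_aleph0_le_addOf hκ
      (fun ζ => (ψ ⟨z (v ζ), hz _⟩).2) ξ
    refine mem_of_superset (φ (c, b)).2 (subset_iInter₂ fun ζ hζ => ?_)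
    exact hψφ ⟨z (v ζ), hz _⟩ (c, b) ⟨hsc _ (v ζ).2, hb (mem_image_of_mem _ hζ)⟩
  · refine ⟨(ψ ⟨_, hmem⟩).2, fun x hx => (hφψ (d₀, x) ⟨_, hmem⟩ ?_).2⟩
    exact (iInter_subset _ (v.symm ⟨x, hx⟩)).trans (by simpa using hzφ x)

/-- If `X` is `T₃`, `N(p,X) ≡cf D × E`, `cf D < add E`, and `E` has
no maximum (i.e. `add E < ∞`), then there is a regular-open escape sequence at `p`
of length `add E`. -/
theorem regular_open_escape_seq_of_length_add {X : Type w} [TopologicalSpace X]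
    [T3Space X] (p : X) (D E : Type u) [Preorder D] [Preorder E]
    (hnomax : ¬ ∃ m : E, ∀ x : E, x ≤ m)
    (hcf : cofOf D < addOf E)
    (heq : CofEquiv (Nbhds X p) (D × E)) :
    ∃ U : (addOf E).ord.ToType → Set X,
      IsEscapeSeq p U ∧ ∀ i, U i = interior (closure (U i)) := by
  obtain ⟨φ, ψ, hφψ, hψφ⟩ := heq.exists_tukey_maps
  obtain ⟨d₀, e₀⟩ := ψ ⟨univ, univ_mem⟩
  have : Nonempty D := ⟨d₀⟩
  have : Nonempty E := ⟨e₀⟩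
  have : IsDirectedOrder (D × E) := isDirectedOrder_of_tukey hφψ
  have : IsDirectedOrder E := isDirectedOrder_of_prod (D := D)
  obtain ⟨F, hFc, hF, hF'⟩ :=
    exists_closed_family_of_tukey hnomax hcf (aleph0_le_addOf hnomax) hφψ hψφ
  exact ⟨_, isEscapeSeq_interior_biInter_Iic hF hF', fun ξ =>
    ((isClosed_biInter fun ζ _ => hFc ζ).interior_closure_interior).symm⟩
end

section
/- If X is a compactum and κ is an infinite cardinal such that X has a free sequence of length κ, then there is a point p ∈ X and an escape sequence at p of length κ. -/
/-!
A cluster point `q` of a free sequence `f` (along its index order) lies in the closure of every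
tail, so by freeness it avoids the closure of every initial segment. The complements of these
closures are then decreasing neighborhoods of `q`, but their intersection misses every `f j`
(it is excluded at stage `j + 1`), while every neighborhood of `q` meets the range of `f`.
-/

open Set Filter Topology

universe u v w

/-- A free sequence: for every index `i`, the closure of the earlier points is
disjoint from the closure of the later (including current) points. -/
def IsFreeSeq {X : Type w} [TopologicalSpace X] {ι : Type u} [LinearOrder ι]
    (f : ι → X) : Prop :=
  ∀ i : ι, Disjoint (closure (f '' {j | j < i})) (closure (f '' {j | i ≤ j}))

section

variable {X : Type*} [TopologicalSpace X] {ι : Type*} [LinearOrder ι]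

theorem disjoint_iInter_compl_closure_image_Iio_range [NoMaxOrder ι] (f : ι → X) :
    Disjoint (⋂ i, (closure (f '' Iio i))ᶜ) (range f) := by
  refine disjoint_right.2 ?_
  rintro _ ⟨j, rfl⟩ hj
  obtain ⟨k, hjk⟩ := exists_gt j
  exact mem_iInter.1 hj k (subset_closure (mem_image_of_mem f hjk))

theorem IsFreeSeq.isEscapeSeq_of_mapClusterPt [Nonempty ι] [NoMaxOrder ι] {f : ι → X}
    (hf : IsFreeSeq f) {q : X} (hq : MapClusterPt q atTop f) :
    IsEscapeSeq q fun i => (closure (f '' Iio i))ᶜ := by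
  rw [mapClusterPt_atTop_iff_forall_mem_closure] at hq
  refine ⟨fun i => isClosed_closure.isOpen_compl.mem_nhds ((hf i).notMem_of_mem_right (hq i)),
    fun i j hij => compl_subset_compl.2 (closure_mono (image_mono (Iio_subset_Iio hij))),
    fun hnhds => ?_⟩
  have hq_range : q ∈ closure (range f) :=
    closure_mono (image_subset_range f _) (hq (Classical.arbitrary ι))
  exact (mem_closure_iff_nhds.1 hq_range _ hnhds).ne_empty
    (disjoint_iInter_compl_closure_image_Iio_range f).inter_eq

theorem IsFreeSeq.exists_isEscapeSeq [CompactSpace X] [Nonempty ι] [NoMaxOrder ι] {f : ι → X}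
    (hf : IsFreeSeq f) : ∃ (q : X) (U : ι → Set X), IsEscapeSeq q U :=
  let ⟨q, hq⟩ := exists_clusterPt_of_compactSpace (map f atTop)
  ⟨q, _, hf.isEscapeSeq_of_mapClusterPt hq⟩

end

theorem escape_seq_of_free_seq_card_general {X : Type u} [TopologicalSpace X] [CompactSpace X]
    (κ : Cardinal.{v}) (hκ : Cardinal.aleph0 ≤ κ)
    (f : κ.ord.ToType → X) (hf : IsFreeSeq f) :
    ∃ (q : X) (U : κ.ord.ToType → Set X), IsEscapeSeq q U := by
  have : Nonempty κ.ord.ToType :=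
    Cardinal.nonempty_ord_toType (Cardinal.aleph0_pos.trans_le hκ).ne'
  have : NoMaxOrder κ.ord.ToType := Cardinal.noMaxOrder hκ
  exact hf.exists_isEscapeSeq

/-- If `X` is a compactum and `κ` is an infinite cardinal such that `X`
has a free sequence of length `κ`, then some point of `X` has an escape sequence of
length `κ`. -/
theorem escape_seq_of_free_seq_card {X : Type u} [TopologicalSpace X] [CompactSpace X]
    [T2Space X] (κ : Cardinal.{v}) (hκ : Cardinal.aleph0 ≤ κ)
    (f : κ.ord.ToType → X) (hf : IsFreeSeq f) :
    ∃ (q : X) (U : κ.ord.ToType → Set X), IsEscapeSeq q U :=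
  escape_seq_of_free_seq_card_general κ hκ f hf
end

section
/- If κ is an infinite regular cardinal and λ is a cardinal with κ < λ, then the poset [λ]^{<κ} of subsets of λ of cardinality less than κ, ordered by inclusion, is not cofinally equivalent to any coordinatewise product ∏_{μ∈S} μ where S is a set of infinite regular cardinals (including the empty product, i.e., the one-element order). -/
/-!
A cofinal equivalence between `P = [λ]^{<κ}` and the product `Q = ∏_{μ ∈ S} μ` yields maps
`φ : P → Q` and `ψ : Q → P` with `φ p ≤ q → p ≤ ψ q` and `ψ q ≤ p → q ≤ φ p`. As `P` is
`κ`-directed, so is `Q`, which forces `κ ≤ μ` for every `μ ∈ S`. The `λ` singletons of `P` are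
sent by `φ` to a family of which no `κ` members are bounded in `Q`. But since `λ > κ`, pigeonhole
on the `κ`-th coordinate (if `κ ∈ S`) gives `κ` members with the same `κ`-th coordinate, and in
every coordinate `μ > κ` any `κ` values are bounded because `μ` is regular.
-/

universe u v w

/-- `[θ]^{<κ}`: subsets of (a set of size) `θ` of cardinality `< κ`, ordered by `⊆`. -/
def SmallSubsets (θ κ : Cardinal.{u}) := {s : Set θ.ord.ToType // Cardinal.mk s < κ}

instance (θ κ : Cardinal.{u}) : Preorder (SmallSubsets θ κ) where
  le s t := Subtype.val s ⊆ Subtype.val t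
  le_refl _ := subset_rfl
  le_trans _ _ _ h1 h2 := Set.Subset.trans h1 h2

open Cardinal Set

-- Families are indexed in the universe of `κ`: the product in the theorem lives one universe up.
def IsKappaDirected (κ : Cardinal.{u}) (P : Type v) [Preorder P] : Prop :=
  ∀ (ι : Type u) (x : ι → P), #ι < κ → BddAbove (range x)

section GaloisTukey

variable {P : Type u} {Q : Type v} [Preorder P] [Preorder Q]

/-- One half of a Galois connection: `φ` is then a Tukey map (it sends unbounded sets to unbounded
sets) and `ψ` a convergent map. -/
def IsGaloisTukey (φ : P → Q) (ψ : Q → P) : Prop :=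
  ∀ p q, φ p ≤ q → p ≤ ψ q

theorem CofEquiv.exists_isGaloisTukey (h : CofEquiv P Q) :
    ∃ (φ : P → Q) (ψ : Q → P), IsGaloisTukey φ ψ ∧ IsGaloisTukey ψ φ := by
  obtain ⟨R, le, -, htrans, f, g, -, -, hf, hg, hcf, hcg⟩ := h
  choose φ hφ using fun p => hcg (f p)
  choose ψ hψ using fun q => hcf (g q)
  refine ⟨φ, ψ, fun p q hpq => ?_, fun q p hqp => ?_⟩
  · exact (hf p (ψ q)).2 (htrans (hφ p) (htrans ((hg _ _).1 hpq) (hψ q)))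
  · exact (hg q (φ p)).2 (htrans (hψ q) (htrans ((hf _ _).1 hqp) (hφ p)))

theorem IsGaloisTukey.bddAbove_of_bddAbove_image {φ : P → Q} {ψ : Q → P} (h : IsGaloisTukey φ ψ)
    {s : Set P} (hs : BddAbove (φ '' s)) : BddAbove s := by
  obtain ⟨q, hq⟩ := hs
  exact ⟨ψ q, fun p hp => h p q (hq (mem_image_of_mem φ hp))⟩

theorem IsKappaDirected.of_isGaloisTukey {κ : Cardinal.{w}} {φ : P → Q} {ψ : Q → P}
    (h : IsGaloisTukey ψ φ) (hP : IsKappaDirected κ P) : IsKappaDirected κ Q := fun ι x hι =>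
  h.bddAbove_of_bddAbove_image (by rw [← range_comp]; exact hP ι (ψ ∘ x) hι)

end GaloisTukey

namespace SmallSubsets

variable {θ κ : Cardinal.{u}}

def singleton (hκ : 1 < κ) (x : θ.ord.ToType) : SmallSubsets θ κ :=
  ⟨{x}, by rwa [mk_singleton]⟩

theorem isKappaDirected (hκ : κ.IsRegular) : IsKappaDirected κ (SmallSubsets θ κ) := by
  intro ι x hι
  refine ⟨⟨⋃ i, (x i).1, (card_iUnion_lt_iff_forall_of_isRegular hκ hι).2 fun i => (x i).2⟩, ?_⟩
  rintro _ ⟨i, rfl⟩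
  exact subset_iUnion (fun i => (x i).1) i

theorem mk_lt_of_bddAbove_image_singleton (hκ : 1 < κ) {A : Set θ.ord.ToType}
    (hA : BddAbove (singleton hκ '' A)) : #A < κ := by
  obtain ⟨u, hu⟩ := hA
  have hAu : A ⊆ u.1 := fun x hx => hu (mem_image_of_mem _ hx) (mem_singleton x)
  exact (mk_le_mk_of_subset hAu).trans_lt u.2

end SmallSubsets

theorem Cardinal.IsRegular.bddAbove_of_mk_lt {μ : Cardinal.{u}} (hμ : μ.IsRegular)
    {s : Set μ.ord.ToType} (hs : #s < μ) : BddAbove s := by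
  have := noMaxOrder hμ.aleph0_le
  rw [← not_isCofinal_iff_bddAbove]
  intro hcof
  have hle := Order.cof_le hcof
  rw [Ordinal.cof_toType, hμ.cof_ord] at hle
  exact hle.not_gt hs

section Product

variable {S : Set Cardinal.{u}}

theorem le_of_isKappaDirected_pi {κ : Cardinal.{u}} (hS : ∀ μ ∈ S, ℵ₀ ≤ μ)
    (h : IsKappaDirected κ (∀ μ : S, (μ : Cardinal).ord.ToType)) : ∀ μ ∈ S, κ ≤ μ := by
  intro μ hμ
  by_contra! hlt
  have := fun ν : S => nonempty_ord_toType (aleph0_pos.trans_le (hS ν ν.2)).ne'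
  have := noMaxOrder (hS μ hμ)
  let sweep : μ.ord.ToType → ∀ ν : S, (ν : Cardinal).ord.ToType :=
    fun β => Function.update (Classical.arbitrary _) ⟨μ, hμ⟩ β
  have hsweep := h _ sweep (by rwa [mk_ord_toType])
  exact not_bddAbove_univ (α := μ.ord.ToType)
    (by simpa [sweep] using bddAbove_range_pi.1 hsweep ⟨μ, hμ⟩)

theorem bddAbove_image_pi_of_mk_image_lt (hS : ∀ μ ∈ S, μ.IsRegular) {ι : Type*}
    (x : ι → ∀ μ : S, (μ : Cardinal).ord.ToType) {A : Set ι}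
    (hA : ∀ μ : S, #((x · μ) '' A) < μ) : BddAbove (x '' A) :=
  bddAbove_pi.2 fun μ => by rw [image_image]; exact (hS μ μ.2).bddAbove_of_mk_lt (hA μ)

theorem exists_mk_eq_and_mk_image_lt {κ : Cardinal.{u}} (hκ : ℵ₀ ≤ κ) (hS : ∀ μ ∈ S, κ ≤ μ)
    {ι : Type u} (hι : κ < #ι) (x : ι → ∀ μ : S, (μ : Cardinal).ord.ToType) :
    ∃ A : Set ι, #A = κ ∧ ∀ μ : S, #((x · μ) '' A) < μ := by
  obtain ⟨A, hAκ, hA⟩ :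
      ∃ A : Set ι, #A = κ ∧ ∀ hκS : κ ∈ S, ((x · ⟨κ, hκS⟩) '' A).Subsingleton := by
    by_cases hκS : κ ∈ S
    · obtain ⟨t, ht⟩ := infinite_pigeonhole_card_lt (x · ⟨κ, hκS⟩) (by rwa [mk_ord_toType])
        (hκ.trans hι.le)
      rw [mk_ord_toType] at ht
      obtain ⟨A, hAt, hAκ⟩ := le_mk_iff_exists_subset.1 ht.le
      exact ⟨A, hAκ, fun _ => subsingleton_singleton.anti (image_subset_iff.2 hAt)⟩
    · obtain ⟨A, hAκ⟩ := le_mk_iff_exists_set.1 hι.le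
      exact ⟨A, hAκ, fun h => absurd h hκS⟩
  refine ⟨A, hAκ, fun μ => ?_⟩
  rcases (hS μ μ.2).eq_or_lt with hμ | hμ
  · obtain ⟨μ, hμS⟩ := μ
    subst hμ
    exact (hA hμS).cardinalMk_le_one.trans_lt (one_lt_aleph0.trans_le hκ)
  · exact mk_image_le.trans_lt (hAκ ▸ hμ)

end Product

/-- If `κ` is an infinite regular cardinal and `κ < λ`, then
`[λ]^{<κ}` (ordered by `⊆`) is not cofinally equivalent to any coordinatewise product
`∏_{μ ∈ S} μ`, where `S` is a set of infinite regular cardinals (the empty product,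
a one-element order, included). -/
theorem smallSubsets_not_cofinally_scalene (κ lam : Cardinal.{u}) (hκ : κ.IsRegular)
    (hlt : κ < lam) (S : Set Cardinal.{u}) (hS : ∀ μ ∈ S, μ.IsRegular) :
    ¬ CofEquiv (SmallSubsets lam κ) (∀ μ : S, (μ : Cardinal.{u}).ord.ToType) := by
  intro hcof
  obtain ⟨φ, ψ, hφψ, hψφ⟩ := hcof.exists_isGaloisTukey
  have hκS : ∀ μ ∈ S, κ ≤ μ := le_of_isKappaDirected_pi (fun μ hμ => (hS μ hμ).aleph0_le)
    ((SmallSubsets.isKappaDirected hκ).of_isGaloisTukey hψφ)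
  have hone : 1 < κ := one_lt_aleph0.trans_le hκ.aleph0_le
  let x := φ ∘ SmallSubsets.singleton hone
  obtain ⟨A, hAκ, hA⟩ := exists_mk_eq_and_mk_image_lt hκ.aleph0_le hκS
    (by rwa [mk_ord_toType]) x
  have hbdd : BddAbove (SmallSubsets.singleton hone '' A) := by
    refine hφψ.bddAbove_of_bddAbove_image ?_
    rw [image_image]
    exact bddAbove_image_pi_of_mk_image_lt hS x hA
  exact (SmallSubsets.mk_lt_of_bddAbove_image_singleton hone hbdd).ne hAκ
end

section
/- Assume CH (2^{ℵ₀} = ℵ₁). For every nonprincipal ultrafilter U on ω there is a nonprincipal ultrafilter W on ω such that U ordered by containment ⊇ is cofinally equivalent to W ordered by eventual containment ⊇*. Equivalently, under CH every nonprincipal neighborhood filter in βω is cofinally equivalent to a neighborhood filter in βω∖ω. -/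
universe u v w

/-- An ultrafilter on `ω` as a preorder under containment `⊇`. -/
def UOrd (U : Ultrafilter ℕ) := {s : Set ℕ // s ∈ U}

instance (U : Ultrafilter ℕ) : Preorder (UOrd U) where
  le s t := Subtype.val t ⊆ Subtype.val s
  le_refl _ := subset_rfl
  le_trans _ _ _ h1 h2 := Set.Subset.trans h2 h1

/-- An ultrafilter on `ω` as a preorder under eventual containment `⊇*`
(`A ⊇* B` iff `B \\ A` is finite). -/
def UOrdStar (U : Ultrafilter ℕ) := {s : Set ℕ // s ∈ U}

instance (U : Ultrafilter ℕ) : Preorder (UOrdStar U) where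
  le s t := (Subtype.val t \ Subtype.val s).Finite
  le_refl s := by simp
  le_trans s t u h1 h2 := by
    refine (h2.union h1).subset ?_
    intro x hx
    by_cases hxt : x ∈ Subtype.val t
    · exact Or.inr ⟨hxt, hx.2⟩
    · exact Or.inl ⟨hx.1, hxt⟩

/-!
Under CH, index the subsets of `ℕ` by `ω₁` so that each one recurs cofinally often, and build by
transfinite recursion a `⊆*`-decreasing tower `(T i)` of infinite sets that decides every subset
of `ℕ`; it generates a nonprincipal ultrafilter `V`. Take `W` to be the `U`-sum of copies of `V`
placed on the columns of `ℕ × ℕ`. The projection `s ↦ {m | s_m ∈ V}` is a monotone cofinal map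
from `(W, ⊇*)` to `(U, ⊇)`. In the other direction, send `A ∈ U` to the part of `A × T (r A)` lying
on or above the graph of the successor function of `A`, where `r` is a monotone unbounded map from
`(U, ⊇)` to `ω₁`; a block argument on `U`, carried out at the stages where a set `s` is scheduled,
makes this map cofinal. Monotone cofinal maps in both directions between directed orders embed
both orders cofinally into their product.
-/

open Filter Set Function Cardinal

section AlmostSubset

variable {α : Type*}

def AlmostSubset (s t : Set α) : Prop := (s \ t).Finite

infix:50 " ⊆* " => AlmostSubset

namespace AlmostSubset

variable {s t u : Set α}

theorem refl (s : Set α) : s ⊆* s := by simp [AlmostSubset]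

theorem of_subset (h : s ⊆ t) : s ⊆* t := by simp [AlmostSubset, sdiff_eq_empty.2 h]

theorem trans (h₁ : s ⊆* t) (h₂ : t ⊆* u) : s ⊆* u :=
  (h₁.union h₂).subset (sdiff_triangle s t u)

theorem inter (h₁ : s ⊆* t) (h₂ : s ⊆* u) : s ⊆* t ∩ u := by
  simpa [AlmostSubset, sdiff_inter] using h₁.union h₂

theorem infinite (h : s ⊆* t) (hs : s.Infinite) : t.Infinite :=
  fun ht => hs ((ht.union h).subset fun x hx => by by_cases hxt : x ∈ t <;> simp [hx, hxt])

theorem preimage {β : Type*} {f : β → α} (hf : Injective f) (h : s ⊆* t) : f ⁻¹' s ⊆* f ⁻¹' t :=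
  (Set.Finite.preimage (f := f) hf.injOn h : (f ⁻¹' (s \ t)).Finite)

end AlmostSubset

theorem Filter.mem_of_almostSubset {l : Filter α} (hl : l ≤ cofinite) {s t : Set α} (hs : s ∈ l)
    (h : s ⊆* t) : t ∈ l :=
  mem_of_superset (sdiff_mem hs (hl h.compl_mem_cofinite)) fun _ hx =>
    by_contra fun hxt => hx.2 ⟨hx.1, hxt⟩

theorem Ultrafilter.infinite_of_mem {U : Ultrafilter α} (hU : (U : Filter α) ≤ cofinite) {A : Set α}
    (hA : A ∈ U) : A.Infinite :=
  frequently_cofinite_mem_iff_infinite.1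
    ((Eventually.frequently (f := U.toFilter) hA).filter_mono hU)

end AlmostSubset

instance (U : Ultrafilter ℕ) : IsDirectedOrder (UOrd U) :=
  ⟨fun a b => ⟨⟨a.1 ∩ b.1, inter_mem a.2 b.2⟩, inter_subset_left, inter_subset_right⟩⟩

instance (U : Ultrafilter ℕ) : IsDirectedOrder (UOrdStar U) :=
  ⟨fun a b => ⟨⟨a.1 ∩ b.1, inter_mem a.2 b.2⟩,
    AlmostSubset.of_subset inter_subset_left, AlmostSubset.of_subset inter_subset_right⟩⟩

theorem cofEquiv_of_monotone_of_cofinal {P : Type u} {Q : Type v} [Preorder P] [Preorder Q]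
    [IsDirectedOrder P] [IsDirectedOrder Q] {f : P → Q} {g : Q → P} (hf : Monotone f)
    (hg : Monotone g) (hf_cof : ∀ q, ∃ p, q ≤ f p) (hg_cof : ∀ p, ∃ q, p ≤ g q) :
    CofEquiv P Q := by
  refine ⟨P × Q, (· ≤ ·), fun _ => le_rfl, fun _ _ _ => le_trans, fun p => (p, f p),
    fun q => (g q, q), fun _ _ h => congrArg Prod.fst h, fun _ _ h => congrArg Prod.snd h,
    fun _ _ => ⟨fun h => ⟨h, hf h⟩, And.left⟩, fun _ _ => ⟨fun h => ⟨hg h, h⟩, And.right⟩,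
    fun ⟨p, q⟩ => ?_, fun ⟨p, q⟩ => ?_⟩
  · obtain ⟨p', hp'⟩ := hf_cof q
    obtain ⟨a, hpa, hp'a⟩ := exists_ge_ge p p'
    exact ⟨a, hpa, hp'.trans (hf hp'a)⟩
  · obtain ⟨q', hq'⟩ := hg_cof p
    obtain ⟨b, hqb, hq'b⟩ := exists_ge_ge q q'
    exact ⟨b, hq'.trans (hg hq'b), hqb⟩

theorem exists_infinite_almostSubset_of_iInter {g : ℕ → Set ℕ}
    (hg : ∀ n, (⋂ k ≤ n, g k).Infinite) : ∃ s : Set ℕ, s.Infinite ∧ ∀ n, s ⊆* g n := by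
  choose z hz using fun n => (hg n).exists_gt n
  refine ⟨range z, infinite_of_forall_exists_gt fun n => ⟨z n, mem_range_self n, (hz n).2⟩,
    fun n => ((finite_Iio n).image z).subset ?_⟩
  rintro _ ⟨⟨k, rfl⟩, hk⟩
  exact ⟨k, lt_of_not_ge fun hnk => hk (mem_iInter₂.1 (hz k).1 n hnk), rfl⟩

theorem exists_infinite_almostSubset_of_directed {κ : Type*} [Preorder κ] [IsDirectedOrder κ]
    [Countable κ] {f : κ → Set ℕ} (hinf : ∀ a, (f a).Infinite) (hf : ∀ ⦃a b⦄, a ≤ b → f b ⊆* f a) :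
    ∃ s : Set ℕ, s.Infinite ∧ ∀ a, s ⊆* f a := by
  rcases isEmpty_or_nonempty κ with _ | _
  · exact ⟨univ, infinite_univ, isEmptyElim⟩
  classical
  obtain ⟨e, he⟩ := exists_surjective_nat κ
  have hbig : ∀ n, (⋂ k ≤ n, f (e k)).Infinite := by
    intro n
    obtain ⟨M, hM⟩ := Finset.exists_le ((Finset.range (n + 1)).image e)
    have hle : ∀ k ≤ n, e k ≤ M := fun k hk =>
      hM _ (Finset.mem_image_of_mem e (Finset.mem_range.2 (Nat.lt_succ_of_le hk)))
    refine ((hinf M).sdiff ((finite_le_nat n).biUnion fun k hk => hf (hle k hk))).mono ?_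
    intro x ⟨hxM, hx⟩
    simp only [mem_iUnion, Set.mem_sdiff, not_exists, not_and, not_not] at hx
    exact mem_iInter₂.2 fun k hk => hx k hk hxM
  obtain ⟨s, hs, hsub⟩ := exists_infinite_almostSubset_of_iInter hbig
  exact ⟨s, hs, fun a => (he a).elim fun k hk => hk ▸ hsub k⟩

theorem exists_inter_nonempty_and_diff_nonempty {𝒜 : Set (Set ℕ)} (h𝒜 : 𝒜.Countable)
    (hinf : ∀ A ∈ 𝒜, A.Infinite) : ∃ C : Set ℕ, ∀ A ∈ 𝒜, (A ∩ C).Nonempty ∧ (A \ C).Nonempty := by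
  rcases 𝒜.eq_empty_or_nonempty with rfl | hne
  · exact ⟨∅, by simp⟩
  obtain ⟨A, rfl⟩ := h𝒜.exists_eq_range hne
  obtain ⟨c, hc, hcA⟩ := extraction_forall_of_frequently (P := fun k x => x ∈ A (k / 2))
    fun k => Nat.frequently_atTop_iff_infinite.2 (hinf _ (mem_range_self _))
  have hcA' : ∀ n i, i < 2 → c (2 * n + i) ∈ A n := fun n i hi => by
    simpa [show (2 * n + i) / 2 = n by omega] using hcA (2 * n + i)
  refine ⟨range fun n => c (2 * n), ?_⟩
  rintro _ ⟨n, rfl⟩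
  refine ⟨⟨c (2 * n), hcA' n 0 two_pos, n, rfl⟩, c (2 * n + 1), hcA' n 1 one_lt_two, ?_⟩
  rintro ⟨m, hm⟩
  have := hc.injective hm
  omega

theorem Ultrafilter.exists_mem_forall_not_subset (U : Ultrafilter ℕ) {𝒜 : Set (Set ℕ)}
    (h𝒜 : 𝒜.Countable) (hinf : ∀ A ∈ 𝒜, A.Infinite) : ∃ B ∈ U, ∀ A ∈ 𝒜, ¬ A ⊆ B := by
  obtain ⟨C, hC⟩ := exists_inter_nonempty_and_diff_nonempty h𝒜 hinf
  by_cases hCU : C ∈ U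
  · exact ⟨C, hCU, fun A hA hAC => (hC A hA).2.ne_empty (sdiff_eq_empty.2 hAC)⟩
  · refine ⟨Cᶜ, U.compl_mem_iff_notMem.2 hCU, fun A hA hAC => ?_⟩
    exact (hC A hA).1.ne_empty
      (disjoint_iff_inter_eq_empty.1 (subset_compl_iff_disjoint_right.1 hAC))

theorem StrictMono.exists_le_lt_succ {a : ℕ → ℕ} (ha : StrictMono a) (h0 : a 0 = 0) (n : ℕ) :
    ∃ k, a k ≤ n ∧ n < a (k + 1) := by
  classical
  have hex : ∃ k, n < a (k + 1) := ⟨n, (ha.id_le n).trans_lt (ha n.lt_succ_self)⟩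
  refine ⟨Nat.find hex, ?_, Nat.find_spec hex⟩
  rcases h : Nat.find hex with _ | k
  · simp [h0]
  · exact not_lt.1 (Nat.find_min hex (h ▸ k.lt_succ_self))

theorem Ultrafilter.exists_mem_spaced (U : Ultrafilter ℕ) {t : Set ℕ} (ht : t.Infinite)
    (K : ℕ → ℕ) : ∃ A ∈ U, ∃ t' ⊆ t, t'.Infinite ∧
      ∀ ⦃m m' n⦄, m' ∈ A → n ∈ t' → m < m' → m' ≤ n → K m ≤ n := by
  choose b hbt hb using fun y => ht.exists_gt y
  set a : ℕ → ℕ := fun k => (fun y => b y + ∑ m ∈ Finset.range y, K m + 1)^[k] 0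
  have ha_succ : ∀ k, a (k + 1) = b (a k) + ∑ m ∈ Finset.range (a k), K m + 1 :=
    fun k => iterate_succ_apply' _ k 0
  have ha : StrictMono a := strictMono_nat_of_lt_succ fun k => by
    rw [ha_succ]
    have := hb (a k)
    omega
  have hK : ∀ k m, m < a k → K m < a (k + 1) := fun k m hm => by
    rw [ha_succ]
    have := Finset.single_le_sum (f := K) (fun _ _ => Nat.zero_le _) (Finset.mem_range.2 hm)
    omega
  -- Sort the blocks `[a k, a (k + 1))` by `k % 3` and let `A` be the class in `U`. Points of `t'`
  -- are taken two classes later, so a whole block, which exceeds every `K m` with `m < m'`, lies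
  -- between any `m' ∈ A` and any later `n ∈ t'`.
  set D : ℕ → Set ℕ := fun e => {n | ∃ k, k % 3 = e ∧ a k ≤ n ∧ n < a (k + 1)}
  obtain ⟨e, he, heU⟩ : ∃ e ∈ Iio 3, D e ∈ U := by
    refine (Ultrafilter.finite_biUnion_mem_iff (finite_Iio 3)).1 (mem_of_superset univ_mem ?_)
    intro n _
    obtain ⟨k, hk⟩ := ha.exists_le_lt_succ rfl n
    exact mem_biUnion (Nat.mod_lt k three_pos) ⟨k, rfl, hk⟩
  refine ⟨D e, heU, t ∩ D ((e + 2) % 3), inter_subset_left, ?_, ?_⟩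
  · refine infinite_of_forall_exists_gt fun N => ?_
    have hNk : N ≤ a (3 * N + (e + 2) % 3) := (Nat.le_add_right _ _).trans' (by omega) |>.trans
      (ha.id_le _)
    refine ⟨b (a (3 * N + (e + 2) % 3)), ⟨hbt _, _, by omega, (hb _).le, ?_⟩, hNk.trans_lt (hb _)⟩
    rw [ha_succ]
    omega
  · rintro m m' n ⟨k, hk, hak, hm'⟩ ⟨-, l, hl, hal, hn⟩ hmm' hm'n
    have hkl : k + 2 ≤ l := by
      have : k < l + 1 := ha.lt_iff_lt.1 (hak.trans_lt (hm'n.trans_lt hn))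
      simp only [mem_Iio] at he
      omega
    have : K m < a (k + 2) := hK (k + 1) m (hmm'.trans hm')
    have : a (k + 2) ≤ a l := ha.monotone hkl
    omega

-- `ℕ` is identified with `ℕ × ℕ` through `Nat.pair`.
def column (s : Set ℕ) (m : ℕ) : Set ℕ := Nat.pair m ⁻¹' s

@[simp]
theorem mem_column {s : Set ℕ} {m n : ℕ} : n ∈ column s m ↔ Nat.pair m n ∈ s := Iff.rfl

theorem Nat.pair_right_injective (m : ℕ) : Injective (Nat.pair m) :=
  fun _ _ hn => (Nat.pair_eq_pair.1 hn).2

theorem column_almostSubset {s t : Set ℕ} (h : s ⊆* t) (m : ℕ) : column s m ⊆* column t m :=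
  h.preimage (Nat.pair_right_injective m)

def spacedPairs (A t : Set ℕ) : Set ℕ :=
  {k | k.unpair.1 ∈ A ∧ k.unpair.2 ∈ t ∧ ∃ m' ∈ A, k.unpair.1 < m' ∧ m' ≤ k.unpair.2}

theorem spacedPairs_mono_left {A A' t : Set ℕ} (h : A' ⊆ A) :
    spacedPairs A' t ⊆ spacedPairs A t :=
  fun _ ⟨hm, hn, m', hm', hlt⟩ => ⟨h hm, hn, m', h hm', hlt⟩

theorem finite_unpair_snd_mem_fst_lt {D : Set ℕ} (hD : D.Finite) :
    {k : ℕ | k.unpair.2 ∈ D ∧ k.unpair.1 < k.unpair.2}.Finite := by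
  obtain ⟨B, hB⟩ := hD.bddAbove
  refine (((finite_Iic B).prod hD).image fun p => Nat.pair p.1 p.2).subset fun k ⟨hk, hlt⟩ => ?_
  exact ⟨k.unpair, ⟨(hlt.trans_le (hB hk)).le, hk⟩, Nat.pair_unpair k⟩

theorem spacedPairs_almostSubset_right {A t t' : Set ℕ} (h : t ⊆* t') :
    spacedPairs A t ⊆* spacedPairs A t' :=
  (finite_unpair_snd_mem_fst_lt h).subset fun _ ⟨⟨hm, hn, m', hm', hlt⟩, hk⟩ =>
    ⟨⟨hn, fun hn' => hk ⟨hm, hn', m', hm', hlt⟩⟩, hlt.1.trans_le hlt.2⟩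

theorem almostSubset_column_spacedPairs {A t : Set ℕ} {m m' : ℕ} (hm : m ∈ A) (hm' : m' ∈ A)
    (hlt : m < m') : t ⊆* column (spacedPairs A t) m :=
  (finite_Iio m').subset fun n ⟨hn, hnA⟩ => lt_of_not_ge fun h =>
    hnA (by simpa [spacedPairs] using ⟨hm, hn, m', hm', hlt, h⟩)

def sumUltrafilter (U V : Ultrafilter ℕ) : Ultrafilter ℕ := U.bind fun m => V.map (Nat.pair m)

section SumUltrafilter

variable {U V : Ultrafilter ℕ}

theorem mem_sumUltrafilter {s : Set ℕ} : s ∈ sumUltrafilter U V ↔ {m | column s m ∈ V} ∈ U :=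
  Iff.rfl

theorem sumUltrafilter_le_cofinite (hV : (V : Filter ℕ) ≤ cofinite) :
    (sumUltrafilter U V : Filter ℕ) ≤ cofinite := fun _ hs =>
  mem_sumUltrafilter.2 (univ_mem' fun m => hV ((Nat.pair_right_injective m).tendsto_cofinite hs))

theorem setOf_column_mem_subset (hV : (V : Filter ℕ) ≤ cofinite) {s t : Set ℕ} (h : s ⊆* t) :
    {m | column s m ∈ V} ⊆ {m | column t m ∈ V} :=
  fun m hm => mem_of_almostSubset hV hm (column_almostSubset h m)

theorem exists_mem_sumUltrafilter_setOf_column_mem_subset {A : Set ℕ} (hA : A ∈ U) :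
    ∃ s ∈ sumUltrafilter U V, {m | column s m ∈ V} ⊆ A := by
  refine ⟨{k | k.unpair.1 ∈ A}, mem_sumUltrafilter.2 (mem_of_superset hA fun m hm => ?_),
    fun m hm => ?_⟩
  · exact univ_mem' fun n => by simpa using hm
  · obtain ⟨n, hn⟩ := V.nonempty_of_mem hm
    simpa using hn

theorem spacedPairs_mem_sumUltrafilter (hU : (U : Filter ℕ) ≤ cofinite)
    (hV : (V : Filter ℕ) ≤ cofinite) {A t : Set ℕ} (hA : A ∈ U) (ht : t ∈ V) :
    spacedPairs A t ∈ sumUltrafilter U V := by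
  refine mem_sumUltrafilter.2 (mem_of_superset hA fun m hm => ?_)
  obtain ⟨m', hm', hlt⟩ := (U.infinite_of_mem hU hA).exists_gt m
  exact mem_of_almostSubset hV ht (almostSubset_column_spacedPairs hm hm' hlt)

end SumUltrafilter

theorem exists_infinite_subset_and_subset_or_subset_compl {s : Set ℕ} (hs : s.Infinite)
    (x : Set ℕ) : ∃ t ⊆ s, t.Infinite ∧ (t ⊆ x ∨ t ⊆ xᶜ) := by
  by_cases hsx : (s ∩ x).Infinite
  · exact ⟨s ∩ x, inter_subset_left, hsx, .inl inter_subset_right⟩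
  · refine ⟨s \ x, sdiff_subset, ?_, .inr fun _ h => h.2⟩
    simpa using hs.sdiff (not_infinite.1 hsx)

theorem exists_spacedPairs_subset (U : Ultrafilter ℕ) {s : Set ℕ} (hs : s.Infinite) {x P : Set ℕ}
    (hP : P ∈ U) (hsP : ∀ m ∈ P, s ⊆* column x m) :
    ∃ t ⊆ s, t.Infinite ∧ ∃ A ∈ U, spacedPairs A t ⊆ x := by
  have hK : ∀ m, ∃ K, m ∈ P → ∀ n ∈ s, K ≤ n → n ∈ column x m := fun m => by
    by_cases hm : m ∈ P
    · obtain ⟨K, hK⟩ := eventually_atTop.1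
        (Nat.cofinite_eq_atTop ▸ (hsP m hm).eventually_cofinite_notMem)
      exact ⟨K, fun _ n hn hKn => by_contra fun hnx => hK n hKn ⟨hn, hnx⟩⟩
    · exact ⟨0, fun h => absurd h hm⟩
  choose K hK using hK
  obtain ⟨A, hA, t, hts, ht, hspaced⟩ := U.exists_mem_spaced hs K
  refine ⟨t, hts, ht, A ∩ P, inter_mem hA hP, fun k ⟨⟨_, hmP⟩, hn, m', ⟨hm'A, _⟩, hlt, hle⟩ => ?_⟩
  simpa using hK _ hmP _ (hts hn) (hspaced hm'A hn hlt hle)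

-- The set `x` scheduled for a stage plays two roles: `t` decides it, and, read as a subset of
-- `ℕ × ℕ`, it must contain some `spacedPairs A t` once `U`-many of its columns are generated by the
-- earlier stages. The second role makes `A ↦ spacedPairs A (T (r A))` cofinal.
def IsNextStage (U : Ultrafilter ℕ) {κ : Type*} (f : κ → Set ℕ) (x t : Set ℕ) : Prop :=
  t.Infinite ∧ (∀ a, t ⊆* f a) ∧ (t ⊆ x ∨ t ⊆ xᶜ) ∧
    ({m | ∃ a, f a ⊆* column x m} ∈ U → ∃ A ∈ U, spacedPairs A t ⊆ x)

theorem exists_isNextStage (U : Ultrafilter ℕ) {κ : Type*} [Preorder κ] [IsDirectedOrder κ]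
    [Countable κ] {f : κ → Set ℕ} (hinf : ∀ a, (f a).Infinite) (hf : ∀ ⦃a b⦄, a ≤ b → f b ⊆* f a)
    (x : Set ℕ) : ∃ t, IsNextStage U f x t := by
  obtain ⟨s₀, hs₀, hs₀f⟩ := exists_infinite_almostSubset_of_directed hinf hf
  obtain ⟨s₁, hs₁s₀, hs₁, hs₁x⟩ := exists_infinite_subset_and_subset_or_subset_compl hs₀ x
  obtain ⟨t, hts₁, ht, htx⟩ : ∃ t ⊆ s₁, t.Infinite ∧
      ({m | ∃ a, f a ⊆* column x m} ∈ U → ∃ A ∈ U, spacedPairs A t ⊆ x) := by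
    by_cases hP : {m | ∃ a, f a ⊆* column x m} ∈ U
    · obtain ⟨t, hts₁, ht, hA⟩ := exists_spacedPairs_subset U hs₁ hP fun m ⟨a, ha⟩ =>
        ((AlmostSubset.of_subset hs₁s₀).trans (hs₀f a)).trans ha
      exact ⟨t, hts₁, ht, fun _ => hA⟩
    · exact ⟨s₁, subset_rfl, hs₁, fun h => absurd h hP⟩
  refine ⟨t, ht, fun a => (AlmostSubset.of_subset (hts₁.trans hs₁s₀)).trans (hs₀f a), ?_, htx⟩
  exact hs₁x.imp hts₁.trans hts₁.trans

section Tower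

variable {ι : Type*} [LinearOrder ι] [WellFoundedLT ι] (U : Ultrafilter ℕ) (task : ι → Set ℕ)

open Classical in
noncomputable def tower : ι → Set ℕ :=
  WellFoundedLT.fix fun i T =>
    if h : ∃ t, IsNextStage U (fun j : Iio i => T j j.2) (task i) t then h.choose else ∅

open Classical in
theorem tower_eq (i : ι) : tower U task i =
    if h : ∃ t, IsNextStage U (fun j : Iio i => tower U task j) (task i) t then h.choose else ∅ :=
  WellFoundedLT.fix_eq _ i

variable {U task}

theorem isNextStage_tower (hIio : ∀ i : ι, (Iio i).Countable) (i : ι) :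
    IsNextStage U (fun j : Iio i => tower U task j) (task i) (tower U task i) := by
  induction i using WellFoundedLT.induction with
  | _ i ih =>
    have : Countable (Iio i) := (hIio i).to_subtype
    have hex : ∃ t, IsNextStage U (fun j : Iio i => tower U task j) (task i) t := by
      refine exists_isNextStage (κ := Iio i) U (fun j => (ih j j.2).1) (fun j k hjk => ?_) (task i)
      rcases hjk.lt_or_eq with hjk | rfl
      · exact (ih k k.2).2.1 ⟨j, hjk⟩
      · exact .refl _
    rw [tower_eq, dif_pos hex]
    exact hex.choose_spec

theorem tower_antitone (hIio : ∀ i : ι, (Iio i).Countable) {i j : ι} (h : i ≤ j) :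
    tower U task j ⊆* tower U task i := by
  rcases h.lt_or_eq with h | rfl
  · exact (isNextStage_tower hIio j).2.1 ⟨i, h⟩
  · exact .refl _

theorem exists_spacedPairs_tower_subset (hIio : ∀ i : ι, (Iio i).Countable) {i : ι}
    (h : {m | ∃ j < i, tower U task j ⊆* column (task i) m} ∈ U) :
    ∃ A ∈ U, spacedPairs A (tower U task i) ⊆ task i :=
  (isNextStage_tower hIio i).2.2.2 (mem_of_superset h fun _ ⟨j, hj, hjm⟩ => ⟨⟨j, hj⟩, hjm⟩)

end Tower

structure IsUltrafilterTower {ι : Type*} [LinearOrder ι] (T : ι → Set ℕ) : Prop where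
  infinite : ∀ i, (T i).Infinite
  antitone : ∀ ⦃i j⦄, i ≤ j → T j ⊆* T i
  subset_or_subset_compl : ∀ s, ∃ i, T i ⊆ s ∨ T i ⊆ sᶜ

namespace IsUltrafilterTower

variable {ι : Type*} [LinearOrder ι] {T : ι → Set ℕ}

theorem exists_almostSubset_inter (hT : IsUltrafilterTower T) {s t : Set ℕ} {i j : ι}
    (hi : T i ⊆* s) (hj : T j ⊆* t) : ∃ k, T k ⊆* s ∩ t :=
  ⟨max i j, ((hT.antitone (le_max_left i j)).trans hi).inter
    ((hT.antitone (le_max_right i j)).trans hj)⟩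

variable (hT : IsUltrafilterTower T)

def filter : Filter ℕ where
  sets := {s | ∃ i, T i ⊆* s}
  univ_sets := (hT.subset_or_subset_compl ∅).elim fun i _ => ⟨i, .of_subset (subset_univ _)⟩
  sets_of_superset := fun ⟨i, hi⟩ hst => ⟨i, hi.trans (.of_subset hst)⟩
  inter_sets := fun ⟨_, hi⟩ ⟨_, hj⟩ => hT.exists_almostSubset_inter hi hj

noncomputable def ultrafilter : Ultrafilter ℕ :=
  .ofComplNotMemIff hT.filter fun s => by
    refine ⟨fun hs => ?_, fun ⟨i, hi⟩ ⟨j, hj⟩ => ?_⟩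
    · obtain ⟨i, hi | hi⟩ := hT.subset_or_subset_compl s
      · exact ⟨i, .of_subset hi⟩
      · exact absurd ⟨i, .of_subset hi⟩ hs
    · obtain ⟨k, hk⟩ := hT.exists_almostSubset_inter hi hj
      exact hk.infinite (hT.infinite k) (by simp)

theorem mem_ultrafilter {s : Set ℕ} : s ∈ hT.ultrafilter ↔ ∃ i, T i ⊆* s := Iff.rfl

theorem ultrafilter_le_cofinite : (hT.ultrafilter : Filter ℕ) ≤ cofinite := fun _ hs =>
  (hT.subset_or_subset_compl ∅).elim fun i _ => ⟨i, hs.subset fun _ h => h.2⟩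

theorem mem_ultrafilter_self (i : ι) : T i ∈ hT.ultrafilter := ⟨i, .refl _⟩

end IsUltrafilterTower

theorem isUltrafilterTower_tower {ι : Type*} [LinearOrder ι] [WellFoundedLT ι] {U : Ultrafilter ℕ}
    {task : ι → Set ℕ} (hIio : ∀ i : ι, (Iio i).Countable) (htask : Surjective task) :
    IsUltrafilterTower (tower U task) where
  infinite i := (isNextStage_tower hIio i).1
  antitone _ _ := tower_antitone hIio
  subset_or_subset_compl s := (htask s).elim fun i hi => ⟨i, hi ▸ (isNextStage_tower hIio i).2.2.1⟩

theorem countable_Iic_of_countable_Iio {ι : Type*} [LinearOrder ι]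
    (hIio : ∀ i : ι, (Iio i).Countable) (i : ι) : (Iic i).Countable := by
  rw [← Iio_insert]
  exact (hIio i).insert i

theorem exists_forall_lt_of_countable {ι : Type*} [LinearOrder ι] [Uncountable ι]
    (hIio : ∀ i : ι, (Iio i).Countable) {S : Set ι} (hS : S.Countable) : ∃ z, ∀ y ∈ S, y < z := by
  have hS' : (⋃ y ∈ S, Iic y).Countable :=
    hS.biUnion fun y _ => countable_Iic_of_countable_Iio hIio y
  by_contra! h
  exact not_countable_univ (hS'.mono fun z _ => let ⟨_, hy, hzy⟩ := h z; mem_biUnion hy hzy)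

theorem exists_monotone_forall_exists_lt {ι : Type*} [LinearOrder ι] [WellFoundedLT ι]
    [Uncountable ι] {U : Ultrafilter ℕ} (hU : (U : Filter ℕ) ≤ cofinite)
    (hIio : ∀ i : ι, (Iio i).Countable) (idx : Set ℕ ↪ ι) :
    ∃ r : UOrd U → ι, Monotone r ∧ ∀ i, ∃ B : UOrd U, ∀ A, B ≤ A → i < r A := by
  have hB : ∀ i, ∃ B ∈ U, ∀ A ∈ U, idx A < i → ¬ A ⊆ B := fun i => by
    obtain ⟨B, hBU, hB⟩ := U.exists_mem_forall_not_subset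
      (𝒜 := {A | A ∈ U ∧ idx A < i}) (((hIio i).preimage idx.injective).mono fun _ hA => hA.2)
      fun _ hA => U.infinite_of_mem hU hA.1
    exact ⟨B, hBU, fun A hA hAi => hB A ⟨hA, hAi⟩⟩
  choose B hBU hB using hB
  -- `A ⊆ B y` forces `y ≤ idx A`, so the `y` with `A ⊆ B y` are bounded
  have hne : ∀ A : UOrd U, {z | ∀ y, A.1 ⊆ B y → y < z}.Nonempty := fun A => by
    obtain ⟨z, hz⟩ :=
      exists_forall_lt_of_countable hIio (countable_Iic_of_countable_Iio hIio (idx A.1))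
    exact ⟨z, fun y hy => hz y (not_lt.1 fun h => hB y A.1 A.2 h hy)⟩
  let r : UOrd U → ι := fun A => (wellFounded_lt (α := ι)).min _ (hne A)
  have hr : ∀ A y, A.1 ⊆ B y → y < r A := fun A => (wellFounded_lt (α := ι)).min_mem _ (hne A)
  refine ⟨r, fun A A' (h : A'.1 ⊆ A.1) => ?_, fun i => ⟨⟨B i, hBU i⟩, fun A hA => hr A i hA⟩⟩
  exact not_lt.1 ((wellFounded_lt (α := ι)).not_lt_min {z | ∀ y, A.1 ⊆ B y → y < z}
    (x := r A') fun y hy => hr A' y (h.trans hy))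

section Assembly

variable {ι : Type*} [LinearOrder ι] [WellFoundedLT ι] [Uncountable ι] {U : Ultrafilter ℕ}
  {task : ι → Set ℕ}

theorem exists_spacedPairs_tower_almostSubset (hIio : ∀ i : ι, (Iio i).Countable)
    (htask : ∀ s j, ∃ i, j < i ∧ task i = s) (hT : IsUltrafilterTower (tower U task))
    {r : UOrd U → ι} (hr : ∀ i, ∃ B : UOrd U, ∀ A, B ≤ A → i < r A) {s : Set ℕ}
    (hs : s ∈ sumUltrafilter U hT.ultrafilter) :
    ∃ A : UOrd U, spacedPairs A.1 (tower U task (r A)) ⊆* s := by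
  choose j hj using fun m : {m | column s m ∈ hT.ultrafilter} => hT.mem_ultrafilter.1 m.2
  obtain ⟨z, hz⟩ := exists_forall_lt_of_countable hIio (countable_range j)
  obtain ⟨i, hzi, rfl⟩ := htask s z
  obtain ⟨A₀, hA₀, hA₀s⟩ := exists_spacedPairs_tower_subset hIio (mem_of_superset
    (mem_sumUltrafilter.1 hs) fun m hm =>
      ⟨j ⟨m, hm⟩, (hz _ (mem_range_self _)).trans hzi, hj ⟨m, hm⟩⟩)
  obtain ⟨B, hB⟩ := hr i
  refine ⟨⟨A₀ ∩ B.1, inter_mem hA₀ B.2⟩, ?_⟩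
  exact (spacedPairs_almostSubset_right (tower_antitone hIio (hB _ inter_subset_right).le)).trans
    (.of_subset ((spacedPairs_mono_left inter_subset_left).trans hA₀s))

theorem exists_cofEquiv_uOrdStar (hU : (U : Filter ℕ) ≤ cofinite)
    (hIio : ∀ i : ι, (Iio i).Countable) (htask : ∀ s j, ∃ i, j < i ∧ task i = s) :
    ∃ W : Ultrafilter ℕ, (W : Filter ℕ) ≤ cofinite ∧ CofEquiv (UOrd U) (UOrdStar W) := by
  have hsurj : Surjective task := fun s =>
    (htask s (Classical.arbitrary ι)).imp fun _ => And.right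
  have hT : IsUltrafilterTower (tower U task) := isUltrafilterTower_tower hIio hsurj
  obtain ⟨r, hr_mono, hr⟩ := exists_monotone_forall_exists_lt hU hIio (.ofSurjective task hsurj)
  refine ⟨sumUltrafilter U hT.ultrafilter, sumUltrafilter_le_cofinite hT.ultrafilter_le_cofinite,
    cofEquiv_of_monotone_of_cofinal
      (f := fun A => ⟨spacedPairs A.1 (tower U task (r A)), spacedPairs_mem_sumUltrafilter hU
        hT.ultrafilter_le_cofinite A.2 (hT.mem_ultrafilter_self _)⟩)
      (g := fun s => ⟨{m | column s.1 m ∈ hT.ultrafilter}, s.2⟩)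
      (fun A A' h => ?_) (fun _ _ h => setOf_column_mem_subset hT.ultrafilter_le_cofinite h)
      (fun s => exists_spacedPairs_tower_almostSubset hIio htask hT hr s.2) (fun A => ?_)⟩
  · exact (spacedPairs_almostSubset_right (tower_antitone hIio (hr_mono h))).trans
      (.of_subset (spacedPairs_mono_left h))
  · obtain ⟨s, hs, hsA⟩ :=
      exists_mem_sumUltrafilter_setOf_column_mem_subset (V := hT.ultrafilter) A.2
    exact ⟨⟨s, hs⟩, hsA⟩

end Assembly

abbrev Omega1 : Type := (aleph 1 : Cardinal.{0}).ord.ToType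

theorem countable_Iio_omega1 (i : Omega1) : (Iio i).Countable :=
  le_aleph0_iff_set_countable.1 (lt_aleph_one_iff.1 (by simpa using mk_Iio_lt i (by simp)))

instance : Uncountable Omega1 := aleph0_lt_mk_iff.1 (by simp)

theorem exists_forall_exists_lt_eq (hCH : (𝔠 : Cardinal.{0}) = ℵ₁) :
    ∃ task : Omega1 → Set ℕ, ∀ s j, ∃ i, j < i ∧ task i = s := by
  have hcard : #Omega1 = #(Omega1 × Set ℕ) := by
    simp [mk_set, two_power_aleph0, hCH, mul_eq_self (aleph0_le_aleph 1)]
  obtain ⟨e⟩ := Cardinal.eq.1 hcard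
  refine ⟨fun i => (e i).2, fun s j => ?_⟩
  have hfib : ((fun k => e.symm (k, s)) ⁻¹' Iic j).Countable :=
    (countable_Iic_of_countable_Iio countable_Iio_omega1 j).preimage fun k k' h => by simpa using h
  by_contra! h
  exact not_countable_univ (hfib.mono fun k _ => not_lt.1 fun hk => h _ hk (by simp))

theorem continuum_eq_aleph_one (hCH : (2 : Cardinal.{u}) ^ ℵ₀ = ℵ₁) : (𝔠 : Cardinal.{0}) = ℵ₁ :=
  lift_injective.{u} (by simpa [two_power_aleph0] using hCH)

/-- CH: for every nonprincipal ultrafilter `U` on `ω` there is a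
nonprincipal ultrafilter `W` on `ω` such that `(U, ⊇)` is cofinally equivalent to
`(W, ⊇*)`; i.e. under CH every nonprincipal neighborhood filter of `βω` is cofinally
equivalent to a neighborhood filter of `βω ∖ ω`. -/
theorem ch_betaomega_filter_cofinally_equiv_remainder_filter
    (hCH : (2 : Cardinal) ^ Cardinal.aleph0 = Cardinal.aleph 1)
    (U : Ultrafilter ℕ) (hU : ∀ s : Set ℕ, sᶜ.Finite → s ∈ U) :
    ∃ W : Ultrafilter ℕ, (∀ s : Set ℕ, sᶜ.Finite → s ∈ W) ∧
      CofEquiv (UOrd U) (UOrdStar W) := by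
  obtain ⟨task, htask⟩ := exists_forall_exists_lt_eq (continuum_eq_aleph_one hCH)
  exact exists_cofEquiv_uOrdStar hU countable_Iio_omega1 htask
end

section
/- If F and G are nonprincipal filters on ω, then F⊗G is cofinally equivalent to F⊗(G⊗G), all ordered by containment ⊇. In particular, the Fubini square F⊗F is cofinally equivalent to the Fubini cube F⊗(F⊗F). -/
universe u v w

/-- The Fubini product of two filters on `ω`, with respect to the pairing
bijection `Nat.pair`: `E ∈ F ⊗ G` iff `{i | (E)_i ∈ G} ∈ F`, where
`(E)_i = {j | ⟨i,j⟩ ∈ E}`. -/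
def fubini (F G : Filter ℕ) : Filter ℕ where
  sets := {E : Set ℕ | {i : ℕ | {j : ℕ | Nat.pair i j ∈ E} ∈ G} ∈ F}
  univ_sets := by simp
  sets_of_superset := by
    intro E E' hE hsub
    refine Filter.mem_of_superset hE ?_
    intro i hi
    exact Filter.mem_of_superset hi fun j hj => hsub hj
  inter_sets := by
    intro E E' hE hE'
    refine Filter.mem_of_superset (Filter.inter_mem hE hE') ?_
    rintro i ⟨h1, h2⟩
    exact Filter.inter_mem h1 h2

/-- A filter on `ω` as a preorder under containment `⊇`. -/
def FilOrd (F : Filter ℕ) := {s : Set ℕ // s ∈ F}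

instance (F : Filter ℕ) : Preorder (FilOrd F) where
  le s t := Subtype.val t ⊆ Subtype.val s
  le_refl _ := subset_rfl
  le_trans _ _ _ h1 h2 := Set.Subset.trans h2 h1

namespace FubiniProof

lemma cofEquiv_refl (P : Type u) [Preorder P] : CofEquiv P P :=
  ⟨P, (· ≤ ·), fun a => le_refl a, fun _ _ _ h1 h2 => le_trans h1 h2, id, id,
    fun _ _ h => h, fun _ _ h => h, fun _ _ => Iff.rfl, fun _ _ => Iff.rfl,
    fun r => ⟨r, le_refl r⟩, fun r => ⟨r, le_refl r⟩⟩

lemma cofEquiv_of_maps {P Q : Type} [Preorder P] [Preorder Q]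
    (dirP : ∀ a b : P, ∃ c, a ≤ c ∧ b ≤ c) (dirQ : ∀ a b : Q, ∃ c, a ≤ c ∧ b ≤ c)
    (f : P → Q) (g : Q → P) (hf : Monotone f) (hg : Monotone g)
    (hfc : ∀ q : Q, ∃ p : P, q ≤ f p) (hgc : ∀ p : P, ∃ q : Q, p ≤ g q) :
    CofEquiv P Q := by
  refine ⟨P × Q, fun x y => x.1 ≤ y.1 ∧ x.2 ≤ y.2,
    fun x => ⟨le_refl _, le_refl _⟩,
    fun x y z h1 h2 => ⟨le_trans h1.1 h2.1, le_trans h1.2 h2.2⟩,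
    fun p => (p, f p), fun q => (g q, q), ?_, ?_, ?_, ?_, ?_, ?_⟩
  · intro a b h; exact congrArg Prod.fst h
  · intro a b h; exact congrArg Prod.snd h
  · intro a b; exact ⟨fun h => ⟨h, hf h⟩, fun h => h.1⟩
  · intro a b; exact ⟨fun h => ⟨hg h, h⟩, fun h => h.2⟩
  · rintro ⟨p, q⟩
    obtain ⟨p₁, hp₁⟩ := hfc q
    obtain ⟨c, hc1, hc2⟩ := dirP p p₁
    exact ⟨c, hc1, le_trans hp₁ (hf hc2)⟩
  · rintro ⟨p, q⟩
    obtain ⟨q₁, hq₁⟩ := hgc p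
    obtain ⟨c, hc1, hc2⟩ := dirQ q q₁
    exact ⟨c, le_trans hq₁ (hg hc2), hc1⟩

def sec (E : Set ℕ) (i : ℕ) : Set ℕ := {j | Nat.pair i j ∈ E}

def aset (G : Filter ℕ) (E : Set ℕ) : Set ℕ := {i | sec E i ∈ G}

lemma mem_fubini {F G : Filter ℕ} {E : Set ℕ} : E ∈ fubini F G ↔ aset G E ∈ F := Iff.rfl

def dset (A : Set ℕ) (i j : ℕ) : Set ℕ := {k | Nat.pair i (Nat.pair j k) ∈ A}

def chat (G : Filter ℕ) (A : Set ℕ) (i : ℕ) : Set ℕ := {j | dset A i j ∈ G}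

lemma mem_cube {F G : Filter ℕ} {A : Set ℕ} :
    A ∈ fubini F (fubini G G) ↔ {i | chat G A i ∈ G} ∈ F := Iff.rfl

lemma sec_mono {E E' : Set ℕ} (h : E ⊆ E') (i : ℕ) : sec E i ⊆ sec E' i :=
  fun _ hj => h hj

lemma aset_mono (G : Filter ℕ) {E E' : Set ℕ} (h : E ⊆ E') : aset G E ⊆ aset G E' :=
  fun _ hi => Filter.mem_of_superset hi (sec_mono h _)

def bset (G : Filter ℕ) (E : Set ℕ) (n : ℕ) : Set ℕ :=
  {k | ∃ i, n ≤ i ∧ i ∈ aset G E ∧ k ∈ sec E i}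

lemma bset_mono (G : Filter ℕ) {E E' : Set ℕ} (h : E ⊆ E') (n : ℕ) :
    bset G E n ⊆ bset G E' n := by
  rintro k ⟨i, h1, h2, h3⟩
  exact ⟨i, h1, aset_mono G h h2, sec_mono h i h3⟩

lemma exists_ge {F : Filter ℕ} (hF : ∀ s : Set ℕ, sᶜ.Finite → s ∈ F) (hFe : (∅ : Set ℕ) ∉ F)
    {s : Set ℕ} (hs : s ∈ F) (n : ℕ) : ∃ i, n ≤ i ∧ i ∈ s := by
  have h1 : {i : ℕ | n ≤ i} ∈ F := by
    apply hF
    have : {i : ℕ | n ≤ i}ᶜ = Set.Iio n := by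
      ext x; simp [Set.mem_Iio]
    rw [this]; exact Set.finite_Iio n
  have h2 := Filter.inter_mem hs h1
  rcases Set.eq_empty_or_nonempty (s ∩ {i : ℕ | n ≤ i}) with he | ⟨i, hi1, hi2⟩
  · rw [he] at h2; exact absurd h2 hFe
  · exact ⟨i, hi2, hi1⟩

lemma bset_mem {F G : Filter ℕ} (hF : ∀ s : Set ℕ, sᶜ.Finite → s ∈ F)
    (hFe : (∅ : Set ℕ) ∉ F) {E : Set ℕ} (hE : aset G E ∈ F) (n : ℕ) :
    bset G E n ∈ G := by
  obtain ⟨i, hni, hia⟩ := exists_ge hF hFe hE n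
  exact Filter.mem_of_superset hia fun k hk => ⟨i, hni, hia, hk⟩

def phi (G : Filter ℕ) (E : Set ℕ) : Set ℕ :=
  {m | m.unpair.1 ∈ aset G E ∧ m.unpair.2.unpair.1 ∈ bset G E (2 * m.unpair.1) ∧
       m.unpair.2.unpair.2 ∈ bset G E (2 * Nat.pair m.unpair.1 m.unpair.2.unpair.1 + 1)}

lemma mem_phi_pair {G : Filter ℕ} {E : Set ℕ} {i j k : ℕ} :
    Nat.pair i (Nat.pair j k) ∈ phi G E ↔
      (i ∈ aset G E ∧ j ∈ bset G E (2 * i) ∧ k ∈ bset G E (2 * Nat.pair i j + 1)) := by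
  simp [phi]

lemma phi_mono (G : Filter ℕ) {E E' : Set ℕ} (h : E ⊆ E') : phi G E ⊆ phi G E' := by
  rintro m ⟨h1, h2, h3⟩
  exact ⟨aset_mono G h h1, bset_mono G h _ h2, bset_mono G h _ h3⟩

lemma phi_mem {F G : Filter ℕ} (hF : ∀ s : Set ℕ, sᶜ.Finite → s ∈ F)
    (hFe : (∅ : Set ℕ) ∉ F) {E : Set ℕ} (hE : E ∈ fubini F G) :
    phi G E ∈ fubini F (fubini G G) := by
  rw [mem_fubini] at hE
  rw [mem_cube]
  refine Filter.mem_of_superset hE ?_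
  intro i hi
  show chat G (phi G E) i ∈ G
  refine Filter.mem_of_superset (bset_mem hF hFe hE (2 * i)) ?_
  intro j hj
  show dset (phi G E) i j ∈ G
  refine Filter.mem_of_superset (bset_mem hF hFe hE (2 * Nat.pair i j + 1)) ?_
  intro k hk
  show Nat.pair i (Nat.pair j k) ∈ phi G E
  exact mem_phi_pair.2 ⟨hi, hj, hk⟩

open Classical in
noncomputable def cfun (G : Filter ℕ) (A : Set ℕ) (n : ℕ) : Set ℕ :=
  if n % 2 = 0 then
    (if chat G A (n / 2) ∈ G then chat G A (n / 2) else Set.univ)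
  else
    (if dset A (n / 2).unpair.1 (n / 2).unpair.2 ∈ G
      then dset A (n / 2).unpair.1 (n / 2).unpair.2 else Set.univ)

lemma cfun_mem (G : Filter ℕ) (A : Set ℕ) (n : ℕ) : cfun G A n ∈ G := by
  unfold cfun
  split_ifs with h1 h2 h3
  · exact h2
  · exact Filter.univ_mem
  · exact h3
  · exact Filter.univ_mem

lemma cfun_even {G : Filter ℕ} {A : Set ℕ} {i : ℕ} (h : chat G A i ∈ G) :
    cfun G A (2 * i) = chat G A i := by
  unfold cfun
  have h1 : 2 * i % 2 = 0 := by omega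
  have h2 : 2 * i / 2 = i := by omega
  rw [if_pos h1, h2, if_pos h]

lemma cfun_odd {G : Filter ℕ} {A : Set ℕ} {i j : ℕ} (h : dset A i j ∈ G) :
    cfun G A (2 * Nat.pair i j + 1) = dset A i j := by
  unfold cfun
  have h1 : ¬ (2 * Nat.pair i j + 1) % 2 = 0 := by omega
  have h2 : (2 * Nat.pair i j + 1) / 2 = Nat.pair i j := by omega
  rw [if_neg h1, h2, Nat.unpair_pair]
  exact if_pos h

noncomputable def E0 (G : Filter ℕ) (A : Set ℕ) : Set ℕ :=
  {m | chat G A m.unpair.1 ∈ G ∧ ∀ n ∈ Set.Iic m.unpair.1, m.unpair.2 ∈ cfun G A n}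

lemma sec_E0 {G : Filter ℕ} {A : Set ℕ} (i : ℕ) :
    sec (E0 G A) i = {j | chat G A i ∈ G ∧ ∀ n ∈ Set.Iic i, j ∈ cfun G A n} := by
  ext j; simp [sec, E0]

lemma phi_cofinal {F G : Filter ℕ} (hGe : (∅ : Set ℕ) ∉ G) {A : Set ℕ}
    (hA : A ∈ fubini F (fubini G G)) :
    ∃ E ∈ fubini F G, phi G E ⊆ A := by
  rw [mem_cube] at hA
  have hsec : ∀ i, chat G A i ∈ G → sec (E0 G A) i ∈ G := by
    intro i hi
    have hInt : (⋂ n ∈ Set.Iic i, cfun G A n) ∈ G :=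
      (Filter.biInter_mem (Set.finite_Iic i)).2 fun n _ => cfun_mem G A n
    refine Filter.mem_of_superset hInt ?_
    intro j hj
    rw [sec_E0]
    exact ⟨hi, fun n hn => Set.mem_iInter₂.1 hj n hn⟩
  have hE0 : E0 G A ∈ fubini F G := by
    rw [mem_fubini]
    exact Filter.mem_of_superset hA fun i hi => hsec i hi
  refine ⟨E0 G A, hE0, ?_⟩
  have haset : ∀ i, i ∈ aset G (E0 G A) → chat G A i ∈ G := by
    intro i hi
    by_contra hni
    have : sec (E0 G A) i ⊆ ∅ := by
      intro j hj
      rw [sec_E0] at hj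
      exact absurd hj.1 hni
    exact hGe (Filter.mem_of_superset hi this)
  have hbsub : ∀ n, bset G (E0 G A) n ⊆ cfun G A n := by
    rintro n k ⟨i', hni', hi'a, hk⟩
    have hi'c := haset i' hi'a
    rw [sec_E0] at hk
    exact hk.2 n (Set.mem_Iic.2 hni')
  intro m hm
  obtain ⟨h1, h2, h3⟩ := hm
  set i := m.unpair.1 with hidef
  set j := m.unpair.2.unpair.1 with hjdef
  set k := m.unpair.2.unpair.2 with hkdef
  have hic : chat G A i ∈ G := haset i h1
  have hj2 : j ∈ chat G A i := by
    have := hbsub (2 * i) h2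
    rwa [cfun_even hic] at this
  have hd : dset A i j ∈ G := hj2
  have hk2 : k ∈ dset A i j := by
    have := hbsub (2 * Nat.pair i j + 1) h3
    rwa [cfun_odd hd] at this
  have : Nat.pair i (Nat.pair j k) ∈ A := hk2
  rwa [hidef, hjdef, hkdef, Nat.pair_unpair, Nat.pair_unpair] at this

def psi (G : Filter ℕ) (A : Set ℕ) : Set ℕ :=
  {m | {k | Nat.pair m.unpair.1 (Nat.pair m.unpair.2 k) ∈ A} ∈ G}

lemma psi_mono (G : Filter ℕ) {A A' : Set ℕ} (h : A ⊆ A') : psi G A ⊆ psi G A' := by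
  intro m hm
  exact Filter.mem_of_superset hm fun k hk => h hk

lemma sec_psi {G : Filter ℕ} {A : Set ℕ} (i : ℕ) : sec (psi G A) i = chat G A i := by
  ext j
  simp [sec, psi, chat, dset]

lemma psi_mem {F G : Filter ℕ} {A : Set ℕ} (hA : A ∈ fubini F (fubini G G)) :
    psi G A ∈ fubini F G := by
  rw [mem_cube] at hA
  rw [mem_fubini]
  have : aset G (psi G A) = {i | chat G A i ∈ G} := by
    ext i
    show sec (psi G A) i ∈ G ↔ _
    rw [sec_psi]
    rfl
  rw [this]
  exact hA

def AE (E : Set ℕ) : Set ℕ :=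
  {m | Nat.pair m.unpair.1 m.unpair.2.unpair.1 ∈ E ∧ Nat.pair m.unpair.1 m.unpair.2.unpair.2 ∈ E}

lemma dset_AE (E : Set ℕ) (i j : ℕ) :
    dset (AE E) i j = {k | Nat.pair i j ∈ E ∧ Nat.pair i k ∈ E} := by
  ext k; simp [dset, AE]

lemma psi_cofinal {F G : Filter ℕ} (hGe : (∅ : Set ℕ) ∉ G) {E : Set ℕ}
    (hE : E ∈ fubini F G) :
    ∃ A ∈ fubini F (fubini G G), psi G A ⊆ E := by
  rw [mem_fubini] at hE
  refine ⟨AE E, ?_, ?_⟩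
  · rw [mem_cube]
    refine Filter.mem_of_superset hE ?_
    intro i hi
    show chat G (AE E) i ∈ G
    refine Filter.mem_of_superset hi ?_
    intro j hj
    show dset (AE E) i j ∈ G
    rw [dset_AE]
    refine Filter.mem_of_superset hi ?_
    intro k hk
    exact ⟨hj, hk⟩
  · intro m hm
    have hm' : {k | Nat.pair m.unpair.1 m.unpair.2 ∈ E ∧ Nat.pair m.unpair.1 k ∈ E} ∈ G := by
      have h := hm
      simp only [psi, Set.mem_setOf_eq, AE, Nat.unpair_pair] at h
      exact h
    by_cases hE1 : Nat.pair m.unpair.1 m.unpair.2 ∈ E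
    · rwa [Nat.pair_unpair] at hE1
    · exfalso
      apply hGe
      refine Filter.mem_of_superset hm' ?_
      intro k hk
      exact absurd hk.1 hE1

lemma main (F G : Filter ℕ)
    (hF : ∀ s : Set ℕ, sᶜ.Finite → s ∈ F) (hG : ∀ s : Set ℕ, sᶜ.Finite → s ∈ G) :
    CofEquiv (FilOrd (fubini F G)) (FilOrd (fubini F (fubini G G))) := by
  by_cases hFe : (∅ : Set ℕ) ∈ F
  · have hall : ∀ t : Set ℕ, t ∈ F := fun t => Filter.mem_of_superset hFe (Set.empty_subset t)
    have h : fubini F G = fubini F (fubini G G) :=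
      Filter.ext fun s => iff_of_true (mem_fubini.2 (hall _)) (mem_cube.2 (hall _))
    rw [h]
    exact cofEquiv_refl _
  by_cases hGe : (∅ : Set ℕ) ∈ G
  · have hallG : ∀ t : Set ℕ, t ∈ G := fun t => Filter.mem_of_superset hGe (Set.empty_subset t)
    have h : fubini F G = fubini F (fubini G G) := by
      refine Filter.ext fun s => iff_of_true ?_ ?_
      · exact mem_fubini.2 (Filter.mem_of_superset Filter.univ_mem fun i _ => hallG _)
      · exact mem_cube.2 (Filter.mem_of_superset Filter.univ_mem fun i _ => hallG _)
    rw [h]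
    exact cofEquiv_refl _
  · refine cofEquiv_of_maps ?_ ?_
      (fun p => ⟨phi G p.val, phi_mem hF hFe p.prop⟩)
      (fun q => ⟨psi G q.val, psi_mem q.prop⟩) ?_ ?_ ?_ ?_
    · intro a b
      exact ⟨⟨a.val ∩ b.val, Filter.inter_mem a.prop b.prop⟩,
        Set.inter_subset_left, Set.inter_subset_right⟩
    · intro a b
      exact ⟨⟨a.val ∩ b.val, Filter.inter_mem a.prop b.prop⟩,
        Set.inter_subset_left, Set.inter_subset_right⟩
    · intro a b hab
      exact phi_mono G hab
    · intro a b hab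
      exact psi_mono G hab
    · intro q
      obtain ⟨E, hE, hsub⟩ := phi_cofinal hGe q.prop
      exact ⟨⟨E, hE⟩, hsub⟩
    · intro p
      obtain ⟨A, hA, hsub⟩ := psi_cofinal hGe p.prop
      exact ⟨⟨A, hA⟩, hsub⟩

end FubiniProof

/-- If `F` and `G` are nonprincipal filters on `ω`, then
`F ⊗ G ≡cf F ⊗ (G ⊗ G)`; in particular the Fubini square `F ⊗ F` is cofinally
equivalent to the Fubini cube `F ⊗ (F ⊗ F)`. -/
theorem fubini_square_cofinally_equiv_cube (F G : Filter ℕ)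
    (hF : ∀ s : Set ℕ, sᶜ.Finite → s ∈ F) (hG : ∀ s : Set ℕ, sᶜ.Finite → s ∈ G) :
    CofEquiv (FilOrd (fubini F G)) (FilOrd (fubini F (fubini G G))) ∧
    CofEquiv (FilOrd (fubini F F)) (FilOrd (fubini F (fubini F F))) := by
  exact ⟨FubiniProof.main F G hF hG, FubiniProof.main F F hF hF⟩
end
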